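/- arXiv:1604.00868 — 11 statements merged into one kernel-verified Lean document; each statement's English description precedes it below -/
import Mathlib

section
/- Suppose σ > 0 satisfies xᵀ(B + h_p⟨B⟩)RBᵀx ≥ σ|x|₂² for all x ∈ ℝ^N. Let d : [0,∞) → ℝ^N be measurable with ∫₀^∞ |d(s)|₂² ds < ∞, and let (p, Δ) : [0,∞) → ℝ^N × ℝ^N be differentiable and satisfy the closed-loop string dynamics ṗ(t) = −(B + h_p⟨B⟩)RBᵀ(M⁻¹p(t) − v₀𝟙) + B A Δ(t) + d(t), Δ̇(t) = −Bᵀ(M⁻¹p(t) − v₀𝟙) for all t ≥ 0. Then for every t ≥ 0, H(p(t), Δ(t)) ≤ H(p(0), Δ(0)) + (1/(2σ)) ∫₀^∞ |d(s)|₂² ds. -/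
open Matrix MeasureTheory Real

/-- The N×N matrix with 1 on the diagonal and -1 on the first superdiagonal. -/
noncomputable def Bmat (N : ℕ) : Matrix (Fin N) (Fin N) ℝ :=
  Matrix.of fun i j => if j = i then 1 else if (j : ℕ) = (i : ℕ) + 1 then -1 else 0

/-- Entrywise absolute value of `Bmat N`. -/
noncomputable def absB (N : ℕ) : Matrix (Fin N) (Fin N) ℝ :=
  Matrix.of fun i j => |Bmat N i j|

/-- Euclidean norm of a vector in ℝ^N. -/
noncomputable def norm2 {N : ℕ} (x : Fin N → ℝ) : ℝ := Real.sqrt (x ⬝ᵥ x)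

/-- The Hamiltonian H(p, Δ) = ½(p − v₀M𝟙)ᵀ M⁻¹ (p − v₀M𝟙) + ½ Δᵀ A Δ. -/
noncomputable def Ham {N : ℕ} (v0 : ℝ) (m a : Fin N → ℝ) (p Δ : Fin N → ℝ) : ℝ :=
  (1/2) * ((p - v0 • (Matrix.diagonal m *ᵥ fun _ => 1)) ⬝ᵥ
      (Matrix.diagonal (fun i => (m i)⁻¹) *ᵥ (p - v0 • (Matrix.diagonal m *ᵥ fun _ => 1)))) +
  (1/2) * (Δ ⬝ᵥ (Matrix.diagonal a *ᵥ Δ))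

/-!
The Hamiltonian is a storage function for the closed loop. Along solutions its derivative is
`-eᵀ L e + eᵀ d`, where `e = M⁻¹p − v₀𝟙` is the velocity error and
`L = (B + h_p⟨B⟩) R Bᵀ`: the coupling terms `eᵀ B A Δ` and `(AΔ)ᵀ(−Bᵀ e)` cancel. Young's
inequality `eᵀ d ≤ σ|e|² + |d|²/(4σ)` and `σ|e|² ≤ eᵀ L e` bound the derivative by `|d|²/(4σ)`,
and integrating over `[0, t]` gives the claim.
-/

/-- The gradient of the kinetic part of `Ham` in `p`. -/
noncomputable def velocityError {N : ℕ} (v0 : ℝ) (m p : Fin N → ℝ) : Fin N → ℝ :=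
  Matrix.diagonal (fun i => (m i)⁻¹) *ᵥ p - v0 • fun _ => 1

lemma velocityError_apply {N : ℕ} {v0 : ℝ} {m : Fin N → ℝ} (hm : ∀ i, m i ≠ 0)
    (p : Fin N → ℝ) (i : Fin N) : velocityError v0 m p i = (m i)⁻¹ * (p i - v0 * m i) := by
  simp only [velocityError, Pi.sub_apply, mulVec_diagonal, Pi.smul_apply, smul_eq_mul, mul_one]
  field_simp [hm i]

lemma Ham_eq_sum {N : ℕ} (v0 : ℝ) (m a p Δ : Fin N → ℝ) :
    Ham v0 m a p Δ = ∑ i, ((1/2) * (m i)⁻¹ * (p i - v0 * m i) ^ 2 + (1/2) * a i * Δ i ^ 2) := by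
  simp only [Ham, dotProduct, mulVec_diagonal, Pi.sub_apply, Pi.smul_apply, smul_eq_mul,
    Finset.mul_sum, ← Finset.sum_add_distrib]
  exact Finset.sum_congr rfl fun i _ => by ring

lemma HasDerivAt.Ham {N : ℕ} {v0 : ℝ} {m a : Fin N → ℝ} (hm : ∀ i, m i ≠ 0)
    {p Δ : ℝ → Fin N → ℝ} {p' Δ' : Fin N → ℝ} {t : ℝ}
    (hp : HasDerivAt p p' t) (hΔ : HasDerivAt Δ Δ' t) :
    HasDerivAt (fun s => Ham v0 m a (p s) (Δ s))
      (velocityError v0 m (p t) ⬝ᵥ p' + (Matrix.diagonal a *ᵥ Δ t) ⬝ᵥ Δ') t := by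
  simp only [Ham_eq_sum, dotProduct, mulVec_diagonal, velocityError_apply hm,
    ← Finset.sum_add_distrib]
  refine HasDerivAt.fun_sum fun i _ => ?_
  have hpi := (((hasDerivAt_pi.1 hp i).sub_const (v0 * m i)).pow 2).const_mul ((1/2) * (m i)⁻¹)
  have hΔi := ((hasDerivAt_pi.1 hΔ i).pow 2).const_mul ((1/2) * a i)
  convert hpi.add hΔi using 1
  · ext s
    simp only [Pi.add_apply, Pi.pow_apply]
  · simp only [Nat.cast_ofNat, Nat.add_one_sub_one, pow_one]
    ring

/-- The interconnection `[[0, B], [−Bᵀ, 0]]` is skew, so only the damping `K` and the input `d`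
contribute to the power balance. -/
lemma power_balance {N : ℕ} (K B : Matrix (Fin N) (Fin N) ℝ) (a e Δ d : Fin N → ℝ) :
    e ⬝ᵥ (-(K *ᵥ e) + (B * Matrix.diagonal a) *ᵥ Δ + d) +
        (Matrix.diagonal a *ᵥ Δ) ⬝ᵥ -(Bᵀ *ᵥ e) =
      -(e ⬝ᵥ (K *ᵥ e)) + e ⬝ᵥ d := by
  have hskew : e ⬝ᵥ ((B * Matrix.diagonal a) *ᵥ Δ) = (Matrix.diagonal a *ᵥ Δ) ⬝ᵥ (Bᵀ *ᵥ e) := by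
    rw [← mulVec_mulVec, dotProduct_mulVec, ← mulVec_transpose, dotProduct_comm]
  simp only [dotProduct_add, dotProduct_neg, hskew]
  ring

lemma dotProduct_le_young {N : ℕ} {σ : ℝ} (hσ : 0 < σ) (x y : Fin N → ℝ) :
    x ⬝ᵥ y ≤ σ * (x ⬝ᵥ x) + 1 / (4 * σ) * (y ⬝ᵥ y) := by
  simp only [dotProduct, Finset.mul_sum, ← Finset.sum_add_distrib]
  refine Finset.sum_le_sum fun i _ => ?_
  have hsq : σ * (x i * x i) + 1 / (4 * σ) * (y i * y i) - x i * y i =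
      (2 * σ * x i - y i) ^ 2 / (4 * σ) := by
    field_simp
    ring
  linarith [div_nonneg (sq_nonneg (2 * σ * x i - y i)) (by positivity : (0 : ℝ) ≤ 4 * σ)]

lemma neg_quadForm_add_dotProduct_le {N : ℕ} {K : Matrix (Fin N) (Fin N) ℝ} {σ : ℝ}
    (hσ : 0 < σ) (hK : ∀ x, σ * (x ⬝ᵥ x) ≤ x ⬝ᵥ (K *ᵥ x)) (e d : Fin N → ℝ) :
    -(e ⬝ᵥ (K *ᵥ e)) + e ⬝ᵥ d ≤ 1 / (4 * σ) * (d ⬝ᵥ d) := by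
  linarith [hK e, dotProduct_le_young hσ e d]

lemma le_add_setIntegral_Ioi_of_hasDerivAt_of_le {F F' φ : ℝ → ℝ} {a b : ℝ} (hab : a ≤ b)
    (hF : ∀ s ∈ Set.Icc a b, HasDerivAt F (F' s) s) (hF'φ : ∀ s ∈ Set.Ioo a b, F' s ≤ φ s)
    (hφ : IntegrableOn φ (Set.Ioi a)) (hφ_nonneg : ∀ s ∈ Set.Ioi a, 0 ≤ φ s) :
    F b ≤ F a + ∫ s in Set.Ioi a, φ s := by
  have hφab : IntegrableOn φ (Set.Icc a b) := by
    rw [integrableOn_Icc_iff_integrableOn_Ioc]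
    exact hφ.mono_set Set.Ioc_subset_Ioi_self
  have hFTC : F b - F a ≤ ∫ s in a..b, φ s :=
    intervalIntegral.sub_le_integral_of_hasDeriv_right_of_le hab
      (fun s hs => (hF s hs).continuousAt.continuousWithinAt)
      (fun s hs => (hF s (Set.Ioo_subset_Icc_self hs)).hasDerivWithinAt)
      hφab hF'φ
  have hmono : ∫ s in Set.Ioc a b, φ s ≤ ∫ s in Set.Ioi a, φ s :=
    setIntegral_mono_set hφ (ae_restrict_of_forall_mem measurableSet_Ioi hφ_nonneg)
      Set.Ioc_subset_Ioi_self.eventuallyLE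
  rw [intervalIntegral.integral_of_le hab] at hFTC
  linarith

theorem stmt_0_general (N : ℕ) (hp : ℝ) (v0 : ℝ)
    (r a m : Fin N → ℝ) (hm : ∀ i, 0 < m i)
    (σ : ℝ) (hσ : 0 < σ)
    (hσmin : ∀ x : Fin N → ℝ,
      σ * (x ⬝ᵥ x) ≤ x ⬝ᵥ (((Bmat N + hp • absB N) * Matrix.diagonal r * (Bmat N)ᵀ) *ᵥ x))
    (d : ℝ → Fin N → ℝ)
    (hdint : MeasureTheory.IntegrableOn (fun s => d s ⬝ᵥ d s) (Set.Ioi (0 : ℝ)))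
    (p Δ : ℝ → Fin N → ℝ)
    (hdyn : ∀ t : ℝ, 0 ≤ t →
      HasDerivAt p
        (-(((Bmat N + hp • absB N) * Matrix.diagonal r * (Bmat N)ᵀ) *ᵥ
            (Matrix.diagonal (fun i => (m i)⁻¹) *ᵥ p t - v0 • (fun _ : Fin N => (1:ℝ))))
          + (Bmat N * Matrix.diagonal a) *ᵥ Δ t + d t) t ∧
      HasDerivAt Δ
        (-((Bmat N)ᵀ *ᵥ (Matrix.diagonal (fun i => (m i)⁻¹) *ᵥ p t - v0 • (fun _ : Fin N => (1:ℝ))))) t)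
    (t : ℝ) (ht : 0 ≤ t) :
    Ham v0 m a (p t) (Δ t) ≤ Ham v0 m a (p 0) (Δ 0) +
      (1 / (2 * σ)) * ∫ s in Set.Ioi (0 : ℝ), d s ⬝ᵥ d s := by
  set K := (Bmat N + hp • absB N) * Matrix.diagonal r * (Bmat N)ᵀ
  set e := fun s => velocityError v0 m (p s)
  have hHam : ∀ s ∈ Set.Icc 0 t, HasDerivAt (fun s => Ham v0 m a (p s) (Δ s))
      (-(e s ⬝ᵥ (K *ᵥ e s)) + e s ⬝ᵥ d s) s := fun s hs => by
    obtain ⟨hps, hΔs⟩ := hdyn s hs.1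
    have hderiv := HasDerivAt.Ham (v0 := v0) (a := a) (fun i => (hm i).ne') hps hΔs
    rwa [velocityError, power_balance] at hderiv
  have hbound : ∀ s ∈ Set.Ioo 0 t,
      -(e s ⬝ᵥ (K *ᵥ e s)) + e s ⬝ᵥ d s ≤ 1 / (2 * σ) * (d s ⬝ᵥ d s) := fun s _ =>
    calc _ ≤ 1 / (4 * σ) * (d s ⬝ᵥ d s) := neg_quadForm_add_dotProduct_le hσ hσmin (e s) (d s)
      _ ≤ 1 / (2 * σ) * (d s ⬝ᵥ d s) :=
        mul_le_mul_of_nonneg_right (by gcongr; norm_num) (dotProduct_self_star_nonneg (d s))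
  rw [← integral_const_mul]
  exact le_add_setIntegral_Ioi_of_hasDerivAt_of_le ht hHam hbound (hdint.const_mul _)
    fun s _ => mul_nonneg (by positivity) (dotProduct_self_star_nonneg (d s))

/-- disturbance bound on the Hamiltonian for symmetric position coupling. -/
theorem stmt_0 (N : ℕ) (hN : 1 ≤ N) (hp : ℝ) (hhp : 0 ≤ hp) (v0 : ℝ)
    (r a m : Fin N → ℝ) (hr : ∀ i, 0 < r i) (ha : ∀ i, 0 < a i) (hm : ∀ i, 0 < m i)
    (σ : ℝ) (hσ : 0 < σ)
    (hσmin : ∀ x : Fin N → ℝ,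
      σ * (x ⬝ᵥ x) ≤ x ⬝ᵥ (((Bmat N + hp • absB N) * Matrix.diagonal r * (Bmat N)ᵀ) *ᵥ x))
    (d : ℝ → Fin N → ℝ) (hdmeas : Measurable d)
    (hdint : MeasureTheory.IntegrableOn (fun s => d s ⬝ᵥ d s) (Set.Ioi (0 : ℝ)))
    (p Δ : ℝ → Fin N → ℝ)
    (hdyn : ∀ t : ℝ, 0 ≤ t →
      HasDerivAt p
        (-(((Bmat N + hp • absB N) * Matrix.diagonal r * (Bmat N)ᵀ) *ᵥ
            (Matrix.diagonal (fun i => (m i)⁻¹) *ᵥ p t - v0 • (fun _ : Fin N => (1:ℝ))))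
          + (Bmat N * Matrix.diagonal a) *ᵥ Δ t + d t) t ∧
      HasDerivAt Δ
        (-((Bmat N)ᵀ *ᵥ (Matrix.diagonal (fun i => (m i)⁻¹) *ᵥ p t - v0 • (fun _ : Fin N => (1:ℝ))))) t)
    (t : ℝ) (ht : 0 ≤ t) :
    Ham v0 m a (p t) (Δ t) ≤ Ham v0 m a (p 0) (Δ 0) +
      (1 / (2 * σ)) * ∫ s in Set.Ioi (0 : ℝ), d s ⬝ᵥ d s :=
  stmt_0_general N hp v0 r a m hm σ hσ hσmin d hdint p Δ hdyn t ht
end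

section
/- Assume h_p ≥ 0 and r_i ≥ r_{i+1} for i = 1,…,N−1. Let (p, Δ) : [0,∞) → ℝ^N × ℝ^N be differentiable and satisfy the autonomous (disturbance-free) closed-loop string dynamics ṗ(t) = −(B + h_p⟨B⟩)RBᵀ(M⁻¹p(t) − v₀𝟙) + B A Δ(t), Δ̇(t) = −Bᵀ(M⁻¹p(t) − v₀𝟙) for all t ≥ 0. Then the function t ↦ H(p(t), Δ(t)) is nonincreasing on [0,∞). -/
/-!
Along a solution, `dH/dt = w ⬝ ṗ + AΔ ⬝ Δ̇` with `w = M⁻¹p - v₀𝟙`. The coupling terms `w ⬝ BAΔ` and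
`-AΔ ⬝ Bᵀw` cancel, leaving `dH/dt = -wᵀ(B + h_p⟨B⟩)RBᵀw`. The part `BRBᵀ` is positive
semidefinite. Writing `B = 1 - S` and `⟨B⟩ = 1 + S` with `S` the superdiagonal shift, the other part
is `wᵀRw - uᵀRu` for `u = Sᵀw = (0, w₁, …, w_{N-1})`, and `uᵀRu = ∑ r_{i+1} w_i² ≤ ∑ r_i w_i²`
because `r` is nonincreasing.
-/

open Matrix MeasureTheory Real

section Calculus

variable {𝕜 ι κ : Type*} [NontriviallyNormedField 𝕜] [Fintype ι]
  {x y : 𝕜 → ι → 𝕜} {x' y' : ι → 𝕜} {t : 𝕜}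

theorem HasDerivAt.dotProduct (hx : HasDerivAt x x' t) (hy : HasDerivAt y y' t) :
    HasDerivAt (fun s => x s ⬝ᵥ y s) (x' ⬝ᵥ y t + x t ⬝ᵥ y') t := by
  simp only [_root_.dotProduct, ← Finset.sum_add_distrib]
  exact HasDerivAt.fun_sum fun i _ => (hasDerivAt_pi.1 hx i).mul (hasDerivAt_pi.1 hy i)

theorem HasDerivAt.const_mulVec (Q : Matrix κ ι 𝕜) (hx : HasDerivAt x x' t) :
    HasDerivAt (fun s => Q *ᵥ x s) (Q *ᵥ x') t :=
  hasDerivAt_pi.2 fun i => HasDerivAt.fun_sum fun j _ => (hasDerivAt_pi.1 hx j).const_mul (Q i j)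

theorem HasDerivAt.dotProduct_mulVec_self {Q : Matrix ι ι 𝕜} (hQ : Qᵀ = Q)
    (hx : HasDerivAt x x' t) :
    HasDerivAt (fun s => x s ⬝ᵥ (Q *ᵥ x s)) (2 * ((Q *ᵥ x t) ⬝ᵥ x')) t := by
  refine (hx.dotProduct (hx.const_mulVec Q)).congr_deriv ?_
  rw [dotProduct_mulVec (x t), ← mulVec_transpose, hQ, dotProduct_comm x', two_mul]

end Calculus

theorem hasDerivAt_Ham {N : ℕ} {v0 : ℝ} {m a : Fin N → ℝ} (hm : ∀ i, m i ≠ 0)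
    {p Δ : ℝ → Fin N → ℝ} {p' Δ' : Fin N → ℝ} {t : ℝ}
    (hp : HasDerivAt p p' t) (hΔ : HasDerivAt Δ Δ' t) :
    HasDerivAt (fun s => Ham v0 m a (p s) (Δ s))
      ((diagonal (fun i => (m i)⁻¹) *ᵥ p t - v0 • fun _ => 1) ⬝ᵥ p'
        + (diagonal a *ᵥ Δ t) ⬝ᵥ Δ') t := by
  have hM : diagonal (fun i => (m i)⁻¹) *ᵥ (diagonal m *ᵥ fun _ => 1) = fun _ => 1 := by
    ext i; simp [mulVec_diagonal, hm i]
  have hkin := (hp.sub_const (v0 • (diagonal m *ᵥ fun _ => 1))).dotProduct_mulVec_self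
    (diagonal_transpose fun i => (m i)⁻¹)
  have hpot := hΔ.dotProduct_mulVec_self (diagonal_transpose a)
  refine ((hkin.const_mul (1 / 2)).add (hpot.const_mul (1 / 2))).congr_deriv ?_
  rw [mulVec_sub, mulVec_smul, hM]
  ring

theorem dotProduct_interconnection_cancel {R ι κ : Type*} [CommRing R] [Fintype ι] [Fintype κ]
    (K : Matrix ι ι R) (B : Matrix ι κ R) (A : Matrix κ κ R) (w : ι → R) (δ : κ → R) :
    w ⬝ᵥ (-(K *ᵥ w) + (B * A) *ᵥ δ) + (A *ᵥ δ) ⬝ᵥ (-(Bᵀ *ᵥ w)) = -(w ⬝ᵥ (K *ᵥ w)) := by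
  rw [← mulVec_mulVec, dotProduct_add, dotProduct_mulVec w, ← mulVec_transpose,
    dotProduct_comm (Bᵀ *ᵥ w), dotProduct_neg, dotProduct_neg]
  ring

theorem Fin.antitone_of_succ_le {α : Type*} [Preorder α] {N : ℕ} {f : Fin N → α}
    (hf : ∀ i : Fin N, ∀ h : (i : ℕ) + 1 < N, f ⟨(i : ℕ) + 1, h⟩ ≤ f i) : Antitone f := by
  cases N with
  | zero => exact fun i => i.elim0
  | succ n => exact Fin.antitone_iff_succ_le.2 fun i => hf i.castSucc (by simp)

def shiftMatrix (R : Type*) [Zero R] [One R] (N : ℕ) : Matrix (Fin N) (Fin N) R :=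
  of fun i j => if (j : ℕ) = i + 1 then 1 else 0

theorem Bmat_eq_one_sub (N : ℕ) : Bmat N = 1 - shiftMatrix ℝ N := by
  ext i j
  simp only [Bmat, shiftMatrix, of_apply, Matrix.sub_apply, Matrix.one_apply]
  split_ifs <;> simp only [Fin.ext_iff] at * <;> first | omega | norm_num

theorem absB_eq_one_add (N : ℕ) : absB N = 1 + shiftMatrix ℝ N := by
  ext i j
  simp only [absB, Bmat, shiftMatrix, of_apply, Matrix.add_apply, Matrix.one_apply]
  split_ifs <;> simp only [Fin.ext_iff] at * <;> first | omega | norm_num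

section

variable {R : Type*} [NonAssocSemiring R] {n : ℕ} (v : Fin (n + 1) → R)

@[simp]
theorem shiftMatrix_transpose_mulVec_zero : ((shiftMatrix R (n + 1))ᵀ *ᵥ v) 0 = 0 := by
  simp [shiftMatrix, mulVec, dotProduct]

@[simp]
theorem shiftMatrix_transpose_mulVec_succ (i : Fin n) :
    ((shiftMatrix R (n + 1))ᵀ *ᵥ v) i.succ = v i.castSucc := by
  simp only [shiftMatrix, mulVec, dotProduct, transpose_apply, of_apply, Fin.val_succ,
    add_left_inj, ite_mul, one_mul, zero_mul]
  simp_rw [← Fin.val_castSucc i, Fin.val_inj]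
  simp

end

theorem shiftMatrix_transpose_quadForm_le {R : Type*} [CommRing R] [LinearOrder R]
    [IsStrictOrderedRing R] {N : ℕ} {r : Fin N → R} (hr₀ : 0 ≤ r) (hr : Antitone r)
    (v : Fin N → R) :
    ((shiftMatrix R N)ᵀ *ᵥ v) ⬝ᵥ (diagonal r *ᵥ ((shiftMatrix R N)ᵀ *ᵥ v))
      ≤ v ⬝ᵥ (diagonal r *ᵥ v) := by
  cases N with
  | zero => simp
  | succ n =>
    simp only [dotProduct, mulVec_diagonal]
    rw [Fin.sum_univ_succ, Fin.sum_univ_castSucc (fun i => v i * (r i * v i))]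
    simp only [shiftMatrix_transpose_mulVec_zero, shiftMatrix_transpose_mulVec_succ, zero_mul,
      zero_add]
    refine le_add_of_le_of_nonneg (Finset.sum_le_sum fun i _ => ?_) ?_
    · rw [mul_left_comm, mul_left_comm (v _)]
      exact mul_le_mul_of_nonneg_right (hr Fin.castSucc_lt_succ.le) (mul_self_nonneg _)
    · rw [mul_left_comm]
      exact mul_nonneg (hr₀ _) (mul_self_nonneg _)

theorem dotProduct_absB_mul_diagonal_mul_transpose_mulVec {N : ℕ} (r v : Fin N → ℝ) :
    v ⬝ᵥ ((absB N * diagonal r * (Bmat N)ᵀ) *ᵥ v)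
      = v ⬝ᵥ (diagonal r *ᵥ v)
        - ((shiftMatrix ℝ N)ᵀ *ᵥ v) ⬝ᵥ (diagonal r *ᵥ ((shiftMatrix ℝ N)ᵀ *ᵥ v)) := by
  rw [← mulVec_mulVec, ← mulVec_mulVec, dotProduct_mulVec, ← mulVec_transpose, absB_eq_one_add,
    Bmat_eq_one_sub, transpose_add, transpose_sub, add_mulVec, sub_mulVec, transpose_one,
    one_mulVec]
  simp only [dotProduct, mulVec_diagonal, Pi.add_apply, Pi.sub_apply, ← Finset.sum_sub_distrib]
  exact Finset.sum_congr rfl fun i _ => by ring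

theorem dotProduct_damping_mulVec_nonneg {N : ℕ} {c : ℝ} (hc : 0 ≤ c) {r : Fin N → ℝ}
    (hr₀ : 0 ≤ r) (hr : Antitone r) (v : Fin N → ℝ) :
    0 ≤ v ⬝ᵥ (((Bmat N + c • absB N) * diagonal r * (Bmat N)ᵀ) *ᵥ v) := by
  have hdiss : 0 ≤ v ⬝ᵥ ((Bmat N * diagonal r * (Bmat N)ᵀ) *ᵥ v) := by
    simpa [conjTranspose_eq_transpose_of_trivial] using
      ((PosSemidef.diagonal hr₀).mul_mul_conjTranspose_same (Bmat N)).dotProduct_mulVec_nonneg v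
  have habs : 0 ≤ v ⬝ᵥ ((absB N * diagonal r * (Bmat N)ᵀ) *ᵥ v) := by
    rw [dotProduct_absB_mul_diagonal_mul_transpose_mulVec, sub_nonneg]
    exact shiftMatrix_transpose_quadForm_le hr₀ hr v
  rw [add_mul, add_mul, add_mulVec, dotProduct_add, smul_mul_assoc, smul_mul_assoc, smul_mulVec,
    dotProduct_smul, smul_eq_mul]
  exact add_nonneg hdiss (mul_nonneg hc habs)

theorem stmt_1_general (N : ℕ) (hp : ℝ) (hhp : 0 ≤ hp) (v0 : ℝ)
    (r a m : Fin N → ℝ) (hr : ∀ i, 0 < r i) (hm : ∀ i, 0 < m i)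
    (hrdec : ∀ i : Fin N, ∀ h : (i : ℕ) + 1 < N, r ⟨(i : ℕ) + 1, h⟩ ≤ r i)
    (p Δ : ℝ → Fin N → ℝ)
    (hdyn : ∀ t : ℝ, 0 ≤ t →
      HasDerivAt p
        (-(((Bmat N + hp • absB N) * Matrix.diagonal r * (Bmat N)ᵀ) *ᵥ
            (Matrix.diagonal (fun i => (m i)⁻¹) *ᵥ p t - v0 • (fun _ : Fin N => (1:ℝ))))
          + (Bmat N * Matrix.diagonal a) *ᵥ Δ t) t ∧
      HasDerivAt Δ
        (-((Bmat N)ᵀ *ᵥ (Matrix.diagonal (fun i => (m i)⁻¹) *ᵥ p t - v0 • (fun _ : Fin N => (1:ℝ))))) t) :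
    AntitoneOn (fun t => Ham v0 m a (p t) (Δ t)) (Set.Ici (0 : ℝ)) := by
  set K := (Bmat N + hp • absB N) * diagonal r * (Bmat N)ᵀ
  set w : ℝ → Fin N → ℝ := fun t => diagonal (fun i => (m i)⁻¹) *ᵥ p t - v0 • fun _ => 1
  have hderiv : ∀ t ∈ Set.Ici (0 : ℝ),
      HasDerivAt (fun t => Ham v0 m a (p t) (Δ t)) (-(w t ⬝ᵥ (K *ᵥ w t))) t := fun t ht => by
    obtain ⟨hp', hΔ'⟩ := hdyn t ht
    have h := hasDerivAt_Ham (v0 := v0) (a := a) (fun i => (hm i).ne') hp' hΔ'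
    rwa [dotProduct_interconnection_cancel] at h
  refine antitoneOn_of_hasDerivWithinAt_nonpos (convex_Ici 0)
    (fun t ht => (hderiv t ht).continuousAt.continuousWithinAt)
    (fun t ht => (hderiv t (interior_subset ht)).hasDerivWithinAt) fun t _ => ?_
  exact neg_nonpos.2 <| dotProduct_damping_mulVec_nonneg hhp (fun i => (hr i).le)
    (Fin.antitone_of_succ_le hrdec) (w t)

/-- for the autonomous SPSV/SPAV string with nonincreasing damping gains,
the Hamiltonian is nonincreasing along trajectories. -/
theorem stmt_1 (N : ℕ) (hN : 1 ≤ N) (hp : ℝ) (hhp : 0 ≤ hp) (v0 : ℝ)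
    (r a m : Fin N → ℝ) (hr : ∀ i, 0 < r i) (ha : ∀ i, 0 < a i) (hm : ∀ i, 0 < m i)
    (hrdec : ∀ i : Fin N, ∀ h : (i : ℕ) + 1 < N, r ⟨(i : ℕ) + 1, h⟩ ≤ r i)
    (p Δ : ℝ → Fin N → ℝ)
    (hdyn : ∀ t : ℝ, 0 ≤ t →
      HasDerivAt p
        (-(((Bmat N + hp • absB N) * Matrix.diagonal r * (Bmat N)ᵀ) *ᵥ
            (Matrix.diagonal (fun i => (m i)⁻¹) *ᵥ p t - v0 • (fun _ : Fin N => (1:ℝ))))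
          + (Bmat N * Matrix.diagonal a) *ᵥ Δ t) t ∧
      HasDerivAt Δ
        (-((Bmat N)ᵀ *ᵥ (Matrix.diagonal (fun i => (m i)⁻¹) *ᵥ p t - v0 • (fun _ : Fin N => (1:ℝ))))) t) :
    AntitoneOn (fun t => Ham v0 m a (p t) (Δ t)) (Set.Ici (0 : ℝ)) :=
  stmt_1_general N hp hhp v0 r a m hr hm hrdec p Δ hdyn
end

section
/- Assume h_p ≥ 0, r_i > 0 for all i, and r_i ≥ r_{i+1} for i = 1,…,N−1. Then for every v ∈ ℝ^N, vᵀ(B + h_p⟨B⟩)RBᵀv ≥ r₁v₁² + Σ_{i=2}^{N} r_i(v_{i−1} − v_i)² + h_p r_N v_N². In particular, vᵀ(B + h_p⟨B⟩)RBᵀv > 0 for every v ≠ 0. -/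
open Matrix MeasureTheory Real

section helpers
variable {N : ℕ}

lemma sum_pair {n : ℕ} (a b : Fin n) (hab : a ≠ b) (c d : ℝ) (v : Fin n → ℝ) :
    ∑ j, (if a = j then c else if b = j then d else 0) * v j = c * v a + d * v b := by
  have h : ∀ j, (if a = j then c else if b = j then d else 0) * v j
      = (if a = j then c * v j else 0) + (if b = j then d * v j else 0) := by
    intro j
    by_cases h1 : a = j <;> by_cases h2 : b = j <;> simp_all <;> ring
  simp only [h, Finset.sum_add_distrib, Finset.sum_ite_eq, Finset.mem_univ, if_true]

lemma sum_single {n : ℕ} (a : Fin n) (c : ℝ) (v : Fin n → ℝ) :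
    ∑ j, (if a = j then c else 0) * v j = c * v a := by
  have h : ∀ j, (if a = j then c else 0) * v j = (if a = j then c * v j else 0) := by
    intro j; by_cases h1 : a = j <;> simp_all
  simp only [h, Finset.sum_ite_eq, Finset.mem_univ, if_true]

lemma BT_zero (v : Fin (N + 1) → ℝ) : ((Bmat (N + 1))ᵀ *ᵥ v) 0 = v 0 := by
  show ∑ j, (Bmat (N + 1)) j 0 * v j = v 0
  have h : ∀ j : Fin (N + 1), (Bmat (N + 1)) j 0 * v j
      = (if (0 : Fin (N + 1)) = j then (1:ℝ) else 0) * v j := by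
    intro j
    have : ((0 : Fin (N + 1)) : ℕ) ≠ (j : ℕ) + 1 := by simp
    simp only [Bmat, Matrix.of_apply, this, if_false, eq_comm]
  rw [Finset.sum_congr rfl fun j _ => h j, sum_single]
  ring

lemma BT_succ (v : Fin (N + 1) → ℝ) (j0 : Fin N) :
    ((Bmat (N + 1))ᵀ *ᵥ v) j0.succ = v j0.succ - v j0.castSucc := by
  show ∑ j, (Bmat (N + 1)) j j0.succ * v j = _
  have h : ∀ j : Fin (N + 1), (Bmat (N + 1)) j j0.succ * v j
      = (if j0.succ = j then (1:ℝ) else if j0.castSucc = j then -1 else 0) * v j := by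
    intro j
    have h2 : ((j0.succ : Fin (N+1)) : ℕ) = (j : ℕ) + 1 ↔ j0.castSucc = j := by
      simp only [Fin.ext_iff, Fin.val_succ, Fin.coe_castSucc]; omega
    simp only [Bmat, Matrix.of_apply, eq_comm (a := (j : Fin (N+1)))]
    rw [if_congr h2 rfl rfl]
  rw [Finset.sum_congr rfl fun j _ => h j,
    sum_pair _ _ (by simp [Fin.ext_iff]) 1 (-1) v]
  ring

lemma AbsT_zero (v : Fin (N + 1) → ℝ) : ((absB (N + 1))ᵀ *ᵥ v) 0 = v 0 := by
  show ∑ j, (absB (N + 1)) j 0 * v j = v 0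
  have h : ∀ j : Fin (N + 1), (absB (N + 1)) j 0 * v j
      = (if (0 : Fin (N + 1)) = j then (1:ℝ) else 0) * v j := by
    intro j
    have : ((0 : Fin (N + 1)) : ℕ) ≠ (j : ℕ) + 1 := by simp
    simp only [absB, Bmat, Matrix.of_apply, this, if_false, eq_comm]
    split <;> simp
  rw [Finset.sum_congr rfl fun j _ => h j, sum_single]
  ring

lemma AbsT_succ (v : Fin (N + 1) → ℝ) (j0 : Fin N) :
    ((absB (N + 1))ᵀ *ᵥ v) j0.succ = v j0.succ + v j0.castSucc := by
  show ∑ j, (absB (N + 1)) j j0.succ * v j = _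
  have h : ∀ j : Fin (N + 1), (absB (N + 1)) j j0.succ * v j
      = (if j0.succ = j then (1:ℝ) else if j0.castSucc = j then 1 else 0) * v j := by
    intro j
    have h2 : ((j0.succ : Fin (N+1)) : ℕ) = (j : ℕ) + 1 ↔ j0.castSucc = j := by
      simp only [Fin.ext_iff, Fin.val_succ, Fin.coe_castSucc]; omega
    simp only [absB, Bmat, Matrix.of_apply, eq_comm (a := (j : Fin (N+1)))]
    rw [if_congr h2 rfl rfl]
    split <;> [simp; skip]
    split <;> simp
  rw [Finset.sum_congr rfl fun j _ => h j,
    sum_pair _ _ (by simp [Fin.ext_iff]) 1 1 v]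
  ring

end helpers

lemma quad_eq (N : ℕ) (hp : ℝ) (r : Fin (N + 1) → ℝ) (v : Fin (N + 1) → ℝ) :
    v ⬝ᵥ (((Bmat (N + 1) + hp • absB (N + 1)) * Matrix.diagonal r * (Bmat (N + 1))ᵀ) *ᵥ v)
      = r 0 * (v 0) ^ 2 + (∑ i : Fin N, r i.succ * (v i.castSucc - v i.succ) ^ 2)
        + hp * r (Fin.last N) * (v (Fin.last N)) ^ 2
        + hp * ∑ i : Fin N, (r i.castSucc - r i.succ) * (v i.castSucc) ^ 2 := by
  have hrw : v ⬝ᵥ (((Bmat (N + 1) + hp • absB (N + 1)) * Matrix.diagonal r * (Bmat (N + 1))ᵀ) *ᵥ v)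
      = ∑ i, ((Bmat (N+1))ᵀ *ᵥ v + hp • ((absB (N+1))ᵀ *ᵥ v)) i
          * (r i * (((Bmat (N+1))ᵀ *ᵥ v) i)) := by
    rw [← Matrix.mulVec_mulVec, ← Matrix.mulVec_mulVec, Matrix.dotProduct_mulVec,
      ← Matrix.mulVec_transpose, Matrix.transpose_add, Matrix.transpose_smul,
      Matrix.add_mulVec, Matrix.smul_mulVec]
    simp [dotProduct, Matrix.mulVec_diagonal]
  rw [hrw, Fin.sum_univ_succ]
  simp only [BT_zero, BT_succ, AbsT_zero, AbsT_succ, Pi.add_apply, Pi.smul_apply, smul_eq_mul]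
  have hterm : ∀ j : Fin N,
      (v j.succ - v j.castSucc + hp * (v j.succ + v j.castSucc))
        * (r j.succ * (v j.succ - v j.castSucc))
      = r j.succ * (v j.castSucc - v j.succ) ^ 2 + hp * (r j.succ * v j.succ ^ 2)
        - hp * (r j.succ * v j.castSucc ^ 2) := fun j => by ring
  rw [Finset.sum_congr rfl (fun j _ => hterm j), Finset.sum_sub_distrib,
    Finset.sum_add_distrib, ← Finset.mul_sum, ← Finset.mul_sum]
  have h1 : (∑ i : Fin (N+1), r i * v i ^ 2)
      = r 0 * v 0 ^ 2 + ∑ j : Fin N, r j.succ * v j.succ ^ 2 :=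
    Fin.sum_univ_succ _
  have h2 : (∑ i : Fin (N+1), r i * v i ^ 2)
      = (∑ j : Fin N, r j.castSucc * v j.castSucc ^ 2)
        + r (Fin.last N) * v (Fin.last N) ^ 2 :=
    Fin.sum_univ_castSucc _
  have h3 : (∑ j : Fin N, (r j.castSucc - r j.succ) * v j.castSucc ^ 2)
      = (∑ j : Fin N, r j.castSucc * v j.castSucc ^ 2)
        - ∑ j : Fin N, r j.succ * v j.castSucc ^ 2 := by
    rw [← Finset.sum_sub_distrib]
    exact Finset.sum_congr rfl fun j _ => by ring
  linear_combination hp * h2 - hp * h1 - hp * h3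

/-- quadratic-form lower bound for the damping matrix (string of N+1 ≥ 1 vehicles,
indexed 0,…,N), and its positive definiteness. -/
theorem stmt_3 (N : ℕ) (hp : ℝ) (hhp : 0 ≤ hp)
    (r : Fin (N + 1) → ℝ) (hr : ∀ i, 0 < r i)
    (hrdec : ∀ i : Fin N, r i.succ ≤ r i.castSucc) :
    (∀ v : Fin (N + 1) → ℝ,
      r 0 * (v 0) ^ 2 + (∑ i : Fin N, r i.succ * (v i.castSucc - v i.succ) ^ 2)
        + hp * r (Fin.last N) * (v (Fin.last N)) ^ 2
      ≤ v ⬝ᵥ (((Bmat (N + 1) + hp • absB (N + 1)) * Matrix.diagonal r * (Bmat (N + 1))ᵀ) *ᵥ v)) ∧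
    (∀ v : Fin (N + 1) → ℝ, v ≠ 0 →
      0 < v ⬝ᵥ (((Bmat (N + 1) + hp • absB (N + 1)) * Matrix.diagonal r * (Bmat (N + 1))ᵀ) *ᵥ v)) := by

  constructor
  · intro v
    rw [quad_eq N hp r v]
    have hSD : 0 ≤ hp * ∑ i : Fin N, (r i.castSucc - r i.succ) * (v i.castSucc) ^ 2 :=
      mul_nonneg hhp (Finset.sum_nonneg fun j _ =>
        mul_nonneg (by linarith [hrdec j]) (sq_nonneg _))
    linarith
  · intro v hv
    rw [quad_eq N hp r v]
    have hSD : 0 ≤ hp * ∑ i : Fin N, (r i.castSucc - r i.succ) * (v i.castSucc) ^ 2 :=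
      mul_nonneg hhp (Finset.sum_nonneg fun j _ =>
        mul_nonneg (by linarith [hrdec j]) (sq_nonneg _))
    have hnn : ∀ j : Fin N, (j ∈ Finset.univ) →
        0 ≤ r j.succ * (v j.castSucc - v j.succ) ^ 2 :=
      fun j _ => mul_nonneg (hr _).le (sq_nonneg _)
    have h0 : 0 ≤ r 0 * v 0 ^ 2 := mul_nonneg (hr _).le (sq_nonneg _)
    have hsum : 0 ≤ ∑ i : Fin N, r i.succ * (v i.castSucc - v i.succ) ^ 2 :=
      Finset.sum_nonneg hnn
    have hlast : 0 ≤ hp * r (Fin.last N) * (v (Fin.last N)) ^ 2 :=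
      mul_nonneg (mul_nonneg hhp (hr _).le) (sq_nonneg _)
    by_contra hcon
    push_neg at hcon
    have hv0 : v 0 = 0 := by
      have h : r 0 * v 0 ^ 2 = 0 := le_antisymm (by linarith) h0
      have h2 : v 0 ^ 2 = 0 := by
        rcases mul_eq_zero.mp h with h' | h'
        · exact absurd h' (hr 0).ne'
        · exact h'
      exact pow_eq_zero_iff two_ne_zero |>.mp h2
    have hsum0 : (∑ i : Fin N, r i.succ * (v i.castSucc - v i.succ) ^ 2) = 0 :=
      le_antisymm (by linarith) hsum
    have hstep : ∀ j : Fin N, v j.castSucc = v j.succ := by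
      intro j
      have h := (Finset.sum_eq_zero_iff_of_nonneg hnn).mp hsum0 j (Finset.mem_univ j)
      have h2 : (v j.castSucc - v j.succ) ^ 2 = 0 := by
        rcases mul_eq_zero.mp h with h' | h'
        · exact absurd h' (hr j.succ).ne'
        · exact h'
      have := pow_eq_zero_iff two_ne_zero |>.mp h2
      linarith
    exact hv (funext fun i => by
      induction i using Fin.induction with
      | zero => exact hv0
      | succ j ih => exact (hstep j).symm.trans ih)
end

section
/- Let R = diag(r₁,…,r_N) with r_i ≥ r̲ > 0 for all i. Then the smallest eigenvalue of the symmetric positive definite matrix BRBᵀ satisfies λ_min(BRBᵀ) ≥ r̲/(4N²); equivalently, xᵀBRBᵀx ≥ (r̲/(4N²))·|x|₂² for every x ∈ ℝ^N. -/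
open Matrix MeasureTheory Real

/-!
`Bᵀ` is the backward difference operator, so `x` is recovered from `y = Bᵀx` by partial sums,
`xᵢ = ∑_{k ≤ i} y_k`. Hence `|xᵢ| ≤ ‖y‖₁ ≤ √N ‖y‖₂` and `‖x‖₂² ≤ N² ‖y‖₂²`, while
`xᵀBRBᵀx = ∑ rᵢ yᵢ² ≥ r̲ ‖y‖₂²`; this even gives the constant `r̲ / N²`.
-/

section Bidiagonal

variable {N : ℕ} (x : Fin N → ℝ)

theorem Bmat_transpose_mulVec_zero (h : 0 < N) :
    ((Bmat N)ᵀ *ᵥ x) ⟨0, h⟩ = x ⟨0, h⟩ := by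
  rw [mulVec, dotProduct, Fintype.sum_eq_single ⟨0, h⟩]
  · simp [Bmat]
  · intro j hj
    simp [Bmat, Fin.ext_iff] at hj ⊢
    omega

theorem Bmat_transpose_mulVec_succ {n : ℕ} (h : n + 1 < N) :
    ((Bmat N)ᵀ *ᵥ x) ⟨n + 1, h⟩ = x ⟨n + 1, h⟩ - x ⟨n, by omega⟩ := by
  rw [mulVec, dotProduct,
    Fintype.sum_eq_add ⟨n + 1, h⟩ ⟨n, by omega⟩ (by simp [Fin.ext_iff])]
  · simp [Bmat, Fin.ext_iff]
    ring
  · rintro j ⟨hj₁, hj₂⟩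
    rw [Ne, Fin.ext_iff] at hj₁ hj₂
    simp only [Bmat, Fin.ext_iff, transpose_apply, of_apply] at hj₁ hj₂ ⊢
    split_ifs <;> first | omega | simp

theorem sum_Iic_Bmat_transpose_mulVec (i : Fin N) :
    ∑ k ∈ Finset.Iic i, ((Bmat N)ᵀ *ᵥ x) k = x i := by
  obtain ⟨n, hn⟩ := i
  induction n with
  | zero =>
    have : Finset.Iic (⟨0, hn⟩ : Fin N) = {⟨0, hn⟩} := by
      ext k; simp [Fin.le_def, Fin.ext_iff]
    rw [this, Finset.sum_singleton, Bmat_transpose_mulVec_zero]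
  | succ n ih =>
    have : Finset.Iic (⟨n + 1, hn⟩ : Fin N) =
        insert ⟨n + 1, hn⟩ (Finset.Iic ⟨n, by omega⟩) := by
      ext k; simp [Fin.le_def, Fin.ext_iff]; omega
    rw [this, Finset.sum_insert (by simp [Fin.le_def]), ih, Bmat_transpose_mulVec_succ]
    ring

theorem abs_le_sum_abs_Bmat_transpose_mulVec (i : Fin N) :
    |x i| ≤ ∑ k, |((Bmat N)ᵀ *ᵥ x) k| := by
  rw [← sum_Iic_Bmat_transpose_mulVec x i]
  exact (Finset.abs_sum_le_sum_abs _ _).trans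
    (Finset.sum_le_sum_of_subset_of_nonneg (Finset.subset_univ _) fun _ _ _ => abs_nonneg _)

end Bidiagonal

theorem dotProduct_self_le_card_sq_mul_of_abs_le_sum_abs {ι : Type*} [Fintype ι]
    {x y : ι → ℝ} (h : ∀ i, |x i| ≤ ∑ k, |y k|) :
    x ⬝ᵥ x ≤ (Fintype.card ι : ℝ) ^ 2 * (y ⬝ᵥ y) := by
  have hy : (∑ k, |y k|) ^ 2 ≤ Fintype.card ι * (y ⬝ᵥ y) := by
    simpa [dotProduct, sq_abs, ← sq] using
      sq_sum_le_card_mul_sum_sq (s := Finset.univ) (f := fun k => |y k|)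
  calc x ⬝ᵥ x = ∑ i, |x i| ^ 2 := by simp [dotProduct, sq_abs, ← sq]
    _ ≤ ∑ _i : ι, (∑ k, |y k|) ^ 2 := by gcongr with i; exact h i
    _ = Fintype.card ι * (∑ k, |y k|) ^ 2 := by simp
    _ ≤ Fintype.card ι * (Fintype.card ι * (y ⬝ᵥ y)) := by gcongr
    _ = (Fintype.card ι : ℝ) ^ 2 * (y ⬝ᵥ y) := by ring

theorem dotProduct_mul_diagonal_mul_transpose_mulVec {m n R : Type*} [Fintype m] [Fintype n]
    [DecidableEq n] [CommSemiring R] (A : Matrix m n R) (r : n → R) (x : m → R) :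
    x ⬝ᵥ ((A * diagonal r * Aᵀ) *ᵥ x) = ∑ i, r i * (Aᵀ *ᵥ x) i ^ 2 := by
  rw [← mulVec_mulVec, ← mulVec_mulVec, dotProduct_mulVec, ← mulVec_transpose]
  simp only [dotProduct, mulVec_diagonal]
  exact Finset.sum_congr rfl fun i _ => by ring

theorem stmt_5_general (N : ℕ)
    (rlow : ℝ) (hrlow : 0 < rlow) (r : Fin N → ℝ) (hr : ∀ i, rlow ≤ r i) :
    ∀ x : Fin N → ℝ,
      rlow / (4 * (N : ℝ) ^ 2) * (x ⬝ᵥ x)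
        ≤ x ⬝ᵥ ((Bmat N * Matrix.diagonal r * (Bmat N)ᵀ) *ᵥ x) := by
  intro x
  set y := (Bmat N)ᵀ *ᵥ x
  have hxy : x ⬝ᵥ x ≤ (N : ℝ) ^ 2 * (y ⬝ᵥ y) := by
    simpa using dotProduct_self_le_card_sq_mul_of_abs_le_sum_abs
      (abs_le_sum_abs_Bmat_transpose_mulVec x)
  have hN : (N : ℝ) ^ 2 / (4 * (N : ℝ) ^ 2) ≤ 1 :=
    div_le_one_of_le₀ (by nlinarith [sq_nonneg (N : ℝ)]) (by positivity)
  rw [dotProduct_mul_diagonal_mul_transpose_mulVec]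
  calc rlow / (4 * (N : ℝ) ^ 2) * (x ⬝ᵥ x)
      ≤ rlow / (4 * (N : ℝ) ^ 2) * ((N : ℝ) ^ 2 * (y ⬝ᵥ y)) := by gcongr
    _ = rlow * ((N : ℝ) ^ 2 / (4 * (N : ℝ) ^ 2)) * (y ⬝ᵥ y) := by ring
    _ ≤ rlow * 1 * (y ⬝ᵥ y) := by
        gcongr
        exact Finset.sum_nonneg fun i _ => mul_self_nonneg (y i)
    _ = ∑ i, rlow * y i ^ 2 := by simp [dotProduct, Finset.mul_sum, sq]
    _ ≤ ∑ i, r i * y i ^ 2 := by gcongr with i; exact hr i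

/-- λ_min(BRBᵀ) ≥ r̲/(4N²), stated as a quadratic-form bound. -/
theorem stmt_5 (N : ℕ) (hN : 1 ≤ N)
    (rlow : ℝ) (hrlow : 0 < rlow) (r : Fin N → ℝ) (hr : ∀ i, rlow ≤ r i) :
    ∀ x : Fin N → ℝ,
      rlow / (4 * (N : ℝ) ^ 2) * (x ⬝ᵥ x)
        ≤ x ⬝ᵥ ((Bmat N * Matrix.diagonal r * (Bmat N)ᵀ) *ᵥ x) :=
  stmt_5_general N rlow hrlow r hr
end

section
/- The eigenvalues of the symmetric matrix BBᵀ (the pinned Laplacian of the path graph on N vertices, i.e., the tridiagonal matrix with diagonal (2, 2, …, 2, 1) and sub- and superdiagonal entries −1) are exactly the N numbers λ_i = 2(1 − cos((2i−1)π/(2N+1))) = 4 sin²((2i−1)π/(4N+2)) for i = 1, …, N. -/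
/-!
Writing a vector as `k ↦ f (k + 1)` for a sequence `f` with ghost values `f 0 = 0` and
`f (N + 1) = f N`, the matrix `B Bᵀ` acts as the second difference
`2 f (k + 1) - f k - f (k + 2)`. The sequence `m ↦ sin (m θ)` satisfies the first boundary
condition always and the second one for `θ = (2i+1)π/(2N+1)`, giving eigenvalue `2 (1 - cos θ)`.
These `N` angles lie in `(0, π)`, where `cos` is injective, so they give `N` distinct
eigenvalues, and an `N × N` matrix has no others.
-/

open Matrix MeasureTheory Real

lemma Fin.sum_ite_val_eq {M : Type*} [AddCommMonoid M] (N m : ℕ) (c : M) :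
    ∑ j : Fin N, (if (j : ℕ) = m then c else 0) = if m < N then c else 0 := by
  rw [Fin.sum_univ_eq_sum_range (fun j => if j = m then c else 0)]
  simp

section Bmat

variable {N : ℕ}

lemma Bmat_mulVec_apply (g : ℕ → ℝ) (hg : g N = 0) (k : Fin N) :
    (Bmat N *ᵥ fun j => g j) k = g k - g (k + 1) := by
  have hterm : ∀ j : Fin N, Bmat N k j * g j =
      (if (j : ℕ) = k then g k else 0) - (if (j : ℕ) = k + 1 then g (k + 1) else 0) := by
    intro j
    simp only [Bmat, of_apply, Fin.ext_iff]
    grind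
  simp only [mulVec, dotProduct, hterm, Finset.sum_sub_distrib, Fin.sum_ite_val_eq, if_pos k.isLt]
  split_ifs with h
  · rfl
  · rw [show (k : ℕ) + 1 = N by omega, hg]

lemma Bmat_transpose_mulVec_apply (f : ℕ → ℝ) (hf : f 0 = 0) (k : Fin N) :
    ((Bmat N)ᵀ *ᵥ fun j => f (j + 1)) k = f (k + 1) - f k := by
  -- at `k = 0` the truncated `k - 1 = 0` is harmless because `f 0 = 0`
  have hterm : ∀ j : Fin N, (Bmat N)ᵀ k j * f (j + 1) =
      (if (j : ℕ) = k then f (k + 1) else 0) - (if (j : ℕ) = k - 1 then f k else 0) := by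
    intro j
    simp only [transpose_apply, Bmat, of_apply, Fin.ext_iff]
    grind
  simp only [mulVec, dotProduct, hterm, Finset.sum_sub_distrib, Fin.sum_ite_val_eq, if_pos k.isLt,
    if_pos (lt_of_le_of_lt (Nat.sub_le _ _) k.isLt)]

lemma Bmat_mul_transpose_mulVec_apply (f : ℕ → ℝ) (h0 : f 0 = 0) (hN : f (N + 1) = f N)
    (k : Fin N) :
    ((Bmat N * (Bmat N)ᵀ) *ᵥ fun j => f (j + 1)) k = 2 * f (k + 1) - f k - f (k + 2) := by
  have hdiff : ((Bmat N)ᵀ *ᵥ fun j => f (j + 1)) = fun j : Fin N => f (j + 1) - f j :=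
    funext (Bmat_transpose_mulVec_apply f h0)
  rw [← mulVec_mulVec, hdiff, Bmat_mulVec_apply (fun m => f (m + 1) - f m) (sub_eq_zero.mpr hN)]
  ring

lemma Bmat_mul_transpose_mulVec_sin (θ : ℝ) (hθ : sin ((N + 1) * θ) = sin (N * θ)) :
    (Bmat N * (Bmat N)ᵀ) *ᵥ (fun k : Fin N => sin ((k + 1) * θ)) =
      (2 * (1 - cos θ)) • fun k : Fin N => sin ((k + 1) * θ) := by
  funext k
  have hk := Bmat_mul_transpose_mulVec_apply (fun m : ℕ => sin (m * θ)) (by simp)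
    (by exact_mod_cast hθ) k
  push_cast at hk
  have hsum : sin (k * θ) + sin ((k + 2) * θ) = 2 * cos θ * sin ((k + 1) * θ) := by
    rw [show (k : ℝ) * θ = (k + 1) * θ - θ by ring,
      show ((k : ℝ) + 2) * θ = (k + 1) * θ + θ by ring, sin_sub, sin_add]
    ring
  rw [hk, Pi.smul_apply, smul_eq_mul]
  linarith

end Bmat

lemma Matrix.hasEigenvector_toLin'_iff {n R : Type*} [Fintype n] [DecidableEq n] [CommRing R]
    {A : Matrix n n R} {μ : R} {v : n → R} :
    Module.End.HasEigenvector (toLin' A) μ v ↔ v ≠ 0 ∧ A *ᵥ v = μ • v := by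
  rw [Module.End.hasEigenvector_iff, Module.End.mem_eigenspace_iff, toLin'_apply, and_comm]

lemma Module.End.mem_range_of_hasEigenvector {K V ι : Type*} [Field K] [AddCommGroup V]
    [Module K V] [FiniteDimensional K V] [Fintype ι] (f : Module.End K V)
    (hcard : Module.finrank K V ≤ Fintype.card ι) (μs : ι → K) (hμs : Function.Injective μs)
    (vs : ι → V) (hvs : ∀ i, f.HasEigenvector (μs i) (vs i)) {μ : K} {v : V}
    (hv : f.HasEigenvector μ v) : μ ∈ Set.range μs := by
  by_contra hμ
  have hinj : Function.Injective fun o : Option ι => o.elim μ μs := by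
    rintro (_ | i) (_ | j) h
    · rfl
    · exact absurd ⟨j, h.symm⟩ hμ
    · exact absurd ⟨i, h⟩ hμ
    · exact congrArg some (hμs h)
  have hli := f.eigenvectors_linearIndependent' _ hinj (fun o => o.elim v vs)
    (by rintro (_ | i); exacts [hv, hvs i])
  have := hli.fintype_card_le_finrank
  rw [Fintype.card_option] at this
  omega

noncomputable def pathAngle (n i : ℕ) : ℝ := (2 * i + 1) * π / (2 * n + 1)

lemma sin_succ_mul_pathAngle (n i : ℕ) :
    sin ((n + 1) * pathAngle n i) = sin (n * pathAngle n i) := by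
  rw [show (n + 1) * pathAngle n i = (π - n * pathAngle n i) + i * (2 * π) by
      simp only [pathAngle]; field_simp; ring,
    sin_add_nat_mul_two_pi, sin_pi_sub]

lemma pathAngle_mem_Ioo {n i : ℕ} (hi : i < n) : pathAngle n i ∈ Set.Ioo 0 π := by
  have hin : (i : ℝ) + 1 ≤ n := by exact_mod_cast hi
  constructor
  · unfold pathAngle; positivity
  · rw [pathAngle, div_lt_iff₀ (by positivity)]
    nlinarith [pi_pos]

lemma injective_one_sub_cos_pathAngle (n : ℕ) :
    Function.Injective fun i : Fin n => 2 * (1 - cos (pathAngle n i)) := by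
  intro i j hij
  have hcos := injOn_cos (Set.Ioo_subset_Icc_self (pathAngle_mem_Ioo i.isLt))
    (Set.Ioo_subset_Icc_self (pathAngle_mem_Ioo j.isLt)) (by simpa using hij)
  have hpos : (2 * n + 1 : ℝ) ≠ 0 := by positivity
  rw [pathAngle, pathAngle, div_left_inj' hpos, mul_left_inj' pi_ne_zero] at hcos
  exact Fin.ext (by exact_mod_cast (by linarith : ((i : ℕ) : ℝ) = j))

lemma Bmat_mul_transpose_hasEigenvector {N : ℕ} (i : Fin N) :
    Module.End.HasEigenvector (toLin' (Bmat N * (Bmat N)ᵀ)) (2 * (1 - cos (pathAngle N i)))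
      (fun k : Fin N => sin ((k + 1) * pathAngle N i)) := by
  have hθ := pathAngle_mem_Ioo i.isLt
  refine Matrix.hasEigenvector_toLin'_iff.mpr ⟨fun h => ?_,
    Bmat_mul_transpose_mulVec_sin _ (sin_succ_mul_pathAngle N i)⟩
  have h0 := congrFun h ⟨0, i.pos⟩
  simp only [Pi.zero_apply, Nat.cast_zero, zero_add, one_mul] at h0
  exact (sin_pos_of_pos_of_lt_pi hθ.1 hθ.2).ne' h0

lemma two_mul_one_sub_cos (x : ℝ) : 2 * (1 - cos x) = 4 * sin (x / 2) ^ 2 := by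
  rw [sin_sq_eq_half_sub, mul_div_cancel₀ x two_ne_zero]
  ring

theorem stmt_6_general (N : ℕ) :
    (∀ μ : ℝ,
      (∃ v : Fin N → ℝ, v ≠ 0 ∧ (Bmat N * (Bmat N)ᵀ) *ᵥ v = μ • v) ↔
      ∃ i : Fin N, μ = 2 * (1 - Real.cos ((2 * (i : ℕ) + 1) * Real.pi / (2 * N + 1)))) ∧
    (∀ i : Fin N,
      2 * (1 - Real.cos ((2 * (i : ℕ) + 1) * Real.pi / (2 * N + 1)))
        = 4 * Real.sin ((2 * (i : ℕ) + 1) * Real.pi / (4 * N + 2)) ^ 2) ∧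
    Function.Injective
      (fun i : Fin N => 2 * (1 - Real.cos ((2 * (i : ℕ) + 1) * Real.pi / (2 * N + 1)))) := by
  refine ⟨fun μ => ⟨fun ⟨v, hv⟩ => ?_, fun ⟨i, hi⟩ => ?_⟩, fun i => ?_,
    injective_one_sub_cos_pathAngle N⟩
  · obtain ⟨i, hi⟩ := Module.End.mem_range_of_hasEigenvector _ (by simp) _
      (injective_one_sub_cos_pathAngle N) _ Bmat_mul_transpose_hasEigenvector
      (Matrix.hasEigenvector_toLin'_iff.mpr hv)
    exact ⟨i, hi.symm⟩
  · exact ⟨_, hi ▸ Matrix.hasEigenvector_toLin'_iff.mp (Bmat_mul_transpose_hasEigenvector i)⟩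
  · rw [two_mul_one_sub_cos]
    congr 3
    field_simp
    ring

/-- the eigenvalues of BBᵀ (pinned path-graph Laplacian) are exactly the N
numbers 2(1 − cos((2i−1)π/(2N+1))) = 4 sin²((2i−1)π/(4N+2)), i = 1,…,N
(here indexed i = 0,…,N−1, with 2i−1 replaced by 2i+1). -/
theorem stmt_6 (N : ℕ) (hN : 1 ≤ N) :
    (∀ μ : ℝ,
      (∃ v : Fin N → ℝ, v ≠ 0 ∧ (Bmat N * (Bmat N)ᵀ) *ᵥ v = μ • v) ↔
      ∃ i : Fin N, μ = 2 * (1 - Real.cos ((2 * (i : ℕ) + 1) * Real.pi / (2 * N + 1)))) ∧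
    (∀ i : Fin N,
      2 * (1 - Real.cos ((2 * (i : ℕ) + 1) * Real.pi / (2 * N + 1)))
        = 4 * Real.sin ((2 * (i : ℕ) + 1) * Real.pi / (4 * N + 2)) ^ 2) ∧
    Function.Injective
      (fun i : Fin N => 2 * (1 - Real.cos ((2 * (i : ℕ) + 1) * Real.pi / (2 * N + 1)))) :=
  stmt_6_general N
end

section
/- The matrix identity B(⟨B⟩ᵀB + Bᵀ⟨B⟩)Bᵀ = diag(2, 0, 0, …, 0) holds; that is, B(⟨B⟩ᵀB + Bᵀ⟨B⟩)Bᵀ = 2·e₁e₁ᵀ, where e₁ is the first standard basis vector of ℝ^N. -/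
/-! Writing `S` for the shift with ones on the first superdiagonal, `B = 1 - S` and `⟨B⟩ = 1 + S`,
so the middle factor is `(1 + S)ᵀ(1 - S) + (1 - S)ᵀ(1 + S) = 2(1 - SᵀS)`. Since `SᵀS` is the
coordinate projection killing only `e₁`, this is `2 e₁e₁ᵀ`; and `B e₁ = e₁` because the first column
of `S` vanishes, so the outer factors `B` and `Bᵀ` leave it unchanged. -/

open Matrix MeasureTheory Real

def upShift (R : Type*) [Zero R] [One R] (N : ℕ) : Matrix (Fin N) (Fin N) R :=
  Matrix.of fun i j => if (j : ℕ) = i + 1 then 1 else 0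

section upShift

variable {R : Type*} {N : ℕ}

lemma upShift_mul_single_of_val_eq_zero [Semiring R] {i : Fin N} (hi : (i : ℕ) = 0)
    (j : Fin N) (c : R) :
    upShift R N * single i j c = 0 := by
  ext a b
  by_cases hb : b = j
  · subst hb
    simp [upShift, hi]
  · simp [hb]

lemma upShift_transpose_mul_self [Ring R] (hN : 0 < N) :
    (upShift R N)ᵀ * upShift R N = 1 - single (⟨0, hN⟩ : Fin N) ⟨0, hN⟩ 1 := by
  ext i j
  simp only [Matrix.mul_apply, Matrix.transpose_apply, upShift, Matrix.of_apply, mul_ite, mul_one,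
    mul_zero, Matrix.sub_apply, Matrix.one_apply, single_apply, Fin.ext_iff]
  by_cases hi : (i : ℕ) = 0
  · simp [hi]
  · obtain ⟨m, hm⟩ : ∃ m : Fin N, (i : ℕ) = m + 1 := ⟨⟨i - 1, by omega⟩, by simp; omega⟩
    rw [Finset.sum_eq_single m]
    · split_ifs <;> first | (exfalso; omega) | simp
    · intro k _ hk
      have hik : (i : ℕ) ≠ k + 1 := fun h => hk (Fin.ext (by omega))
      simp [hik]
    · simp

end upShift

lemma Matrix.transpose_one_add_mul_one_sub_add_swap {n R : Type*} [Fintype n] [DecidableEq n]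
    [Ring R] (S : Matrix n n R) :
    (1 + S)ᵀ * (1 - S) + (1 - S)ᵀ * (1 + S) = 2 • (1 - Sᵀ * S) := by
  simp only [transpose_add, transpose_sub, transpose_one]
  noncomm_ring

lemma Bmat_eq_one_sub_upShift (N : ℕ) : Bmat N = 1 - upShift ℝ N := by
  ext i j
  simp only [Bmat, upShift, Matrix.of_apply, Matrix.sub_apply, Matrix.one_apply, Fin.ext_iff]
  split_ifs <;> first | omega | norm_num

lemma absB_eq_one_add_upShift (N : ℕ) : absB N = 1 + upShift ℝ N := by
  ext i j
  simp only [absB, Bmat, upShift, Matrix.of_apply, Matrix.add_apply, Matrix.one_apply, Fin.ext_iff]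
  split_ifs <;> first | omega | norm_num

lemma absB_transpose_mul_Bmat_add_Bmat_transpose_mul_absB {N : ℕ} (hN : 0 < N) :
    (absB N)ᵀ * Bmat N + (Bmat N)ᵀ * absB N = single (⟨0, hN⟩ : Fin N) ⟨0, hN⟩ 2 := by
  rw [Bmat_eq_one_sub_upShift, absB_eq_one_add_upShift,
    Matrix.transpose_one_add_mul_one_sub_add_swap, upShift_transpose_mul_self hN, sub_sub_cancel,
    smul_single, two_smul, one_add_one_eq_two]

lemma Bmat_mul_single_zero {N : ℕ} (hN : 0 < N) (j : Fin N) (c : ℝ) :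
    Bmat N * single ⟨0, hN⟩ j c = single ⟨0, hN⟩ j c := by
  rw [Bmat_eq_one_sub_upShift, sub_mul, one_mul, upShift_mul_single_of_val_eq_zero rfl, sub_zero]

/-- B(⟨B⟩ᵀB + Bᵀ⟨B⟩)Bᵀ = diag(2, 0, …, 0) = 2·e₁e₁ᵀ. -/
theorem stmt_7 (N : ℕ) (hN : 0 < N) :
    Bmat N * ((absB N)ᵀ * Bmat N + (Bmat N)ᵀ * absB N) * (Bmat N)ᵀ
      = Matrix.single (⟨0, hN⟩ : Fin N) (⟨0, hN⟩ : Fin N) (2 : ℝ) := by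
  calc Bmat N * ((absB N)ᵀ * Bmat N + (Bmat N)ᵀ * absB N) * (Bmat N)ᵀ
      = single ⟨0, hN⟩ ⟨0, hN⟩ 2 * (Bmat N)ᵀ := by
        rw [absB_transpose_mul_Bmat_add_Bmat_transpose_mul_absB hN, Bmat_mul_single_zero]
    _ = (Bmat N * single ⟨0, hN⟩ ⟨0, hN⟩ 2)ᵀ := by rw [transpose_mul, transpose_single]
    _ = single ⟨0, hN⟩ ⟨0, hN⟩ 2 := by rw [Bmat_mul_single_zero, transpose_single]
end

section
/- Fix h_p > 0 and r̄ > 0. There exist a constant c₂ > 0 and N₀ ∈ ℕ such that for every N ≥ N₀ and every diagonal matrix R = diag(r₁,…,r_N) with 0 < r_i ≤ r̄ for all i, there exists a nonzero x ∈ ℝ^N with ‖(B + h_p⟨B⟩)RBᵀ x‖₂ ≤ (c₂ r̄/N)·‖x‖₂; that is, the smallest singular value of (B + h_p⟨B⟩)RBᵀ is at most c₂ r̄/N for N sufficiently large. -/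
open Matrix MeasureTheory Real

lemma sum_sq_lb (N : ℕ) :
    (N : ℝ)^3 / 3 ≤ ∑ i ∈ Finset.range N, (((i:ℝ)+1) * ((i:ℝ)+1)) := by
  induction N with
  | zero => simp
  | succ n ih =>
    rw [Finset.sum_range_succ]
    push_cast
    nlinarith [ih]

lemma succ_sum {N : ℕ} (f : Fin N → ℝ) (i : Fin N) :
    ∑ j : Fin N, (if (j:ℕ) = (i:ℕ) + 1 then f j else 0)
      = if h : (i:ℕ) + 1 < N then f ⟨(i:ℕ)+1, h⟩ else 0 := by
  split_ifs with h
  · have hc : ∀ j : Fin N, ((j:ℕ) = (i:ℕ) + 1) ↔ j = (⟨(i:ℕ)+1, h⟩ : Fin N) := by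
      intro j
      constructor
      · intro hj; exact Fin.ext hj
      · intro hj; subst hj; rfl
    rw [Finset.sum_congr rfl (fun j _ => if_congr (hc j) rfl rfl)]
    simp [Finset.sum_ite_eq']
  · apply Finset.sum_eq_zero
    intro j _
    rw [if_neg]
    intro hj
    exact h (hj ▸ j.isLt)

/-- for h_p > 0, the smallest singular value of (B + h_p⟨B⟩)RBᵀ is at most
c₂ r̄/N for N sufficiently large. -/
theorem stmt_10 (hp rbar : ℝ) (hhp : 0 < hp) (hrbar : 0 < rbar) :
    ∃ c₂ : ℝ, 0 < c₂ ∧ ∃ N₀ : ℕ, ∀ N : ℕ, N₀ ≤ N →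
      ∀ r : Fin N → ℝ, (∀ i, 0 < r i ∧ r i ≤ rbar) →
        ∃ x : Fin N → ℝ, x ≠ 0 ∧
          norm2 (((Bmat N + hp • absB N) * Matrix.diagonal r * (Bmat N)ᵀ) *ᵥ x)
            ≤ c₂ * rbar / (N : ℝ) * norm2 x := by
  refine ⟨4 * (1 + hp), by positivity, 1, fun N hN r hr => ?_⟩
  have hN0 : 0 < N := hN
  have hN1 : (1:ℝ) ≤ (N:ℝ) := by exact_mod_cast hN
  have hNpos : (0:ℝ) < (N:ℝ) := by linarith
  set x : Fin N → ℝ := fun i => (i:ℝ) + 1 with hxdef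
  refine ⟨x, ?_, ?_⟩
  · intro h0
    have : x ⟨0, hN0⟩ = 0 := by rw [h0]; rfl
    simp [hxdef] at this
  · -- Step A : Bᵀ x = 1
    have hu : (Bmat N)ᵀ *ᵥ x = fun _ => 1 := by
      funext j
      simp only [mulVec, dotProduct, transpose_apply, Bmat, of_apply]
      have hsplit : ∀ i : Fin N,
          (if j = i then (1:ℝ) else if (j:ℕ) = (i:ℕ) + 1 then -1 else 0) * x i
            = (if j = i then x i else 0) + (if (j:ℕ) = (i:ℕ) + 1 then -(x i) else 0) := by
        intro i
        by_cases h1 : j = i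
        · rw [if_pos h1, if_pos h1, if_neg (by subst h1; omega)]; ring
        · rw [if_neg h1, if_neg h1]
          split_ifs <;> ring
      rw [Finset.sum_congr rfl (fun i _ => hsplit i), Finset.sum_add_distrib]
      have hA : ∑ i : Fin N, (if j = i then x i else 0) = x j := by
        simp [Finset.sum_ite_eq]
      have hB : ∑ i : Fin N, (if (j:ℕ) = (i:ℕ) + 1 then -(x i) else 0) = -(j:ℕ) := by
        rcases Nat.eq_zero_or_pos (j:ℕ) with hj | hj
        · rw [Finset.sum_eq_zero, hj]
          · simp
          · intro i _
            rw [if_neg]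
            omega
        · set i₀ : Fin N := ⟨(j:ℕ) - 1, by omega⟩ with hi₀
          have hc : ∀ i : Fin N, ((j:ℕ) = (i:ℕ) + 1) ↔ i = i₀ := by
            intro i
            constructor
            · intro h; exact Fin.ext (by simp [hi₀]; omega)
            · intro h; subst h; simp [hi₀]; omega
          rw [Finset.sum_congr rfl (fun i _ => if_congr (hc i) rfl rfl)]
          simp only [Finset.sum_ite_eq', Finset.mem_univ, if_pos]
          have hval : ((i₀:ℕ):ℝ) = (j:ℕ) - 1 := by
            have : (i₀:ℕ) = (j:ℕ) - 1 := rfl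
            rw [this]
            have h1 : (1:ℕ) ≤ (j:ℕ) := hj
            push_cast [h1]
            ring
          simp only [hxdef, hval]
          ring
      rw [hA, hB]
      simp [hxdef]
    -- Step B+C
    have hMx : (((Bmat N + hp • absB N) * Matrix.diagonal r * (Bmat N)ᵀ) *ᵥ x)
        = (Bmat N + hp • absB N) *ᵥ r := by
      have hd : Matrix.diagonal r *ᵥ (fun _ => (1:ℝ)) = r := by
        funext i; simp [mulVec_diagonal]
      rw [← mulVec_mulVec, hu, ← mulVec_mulVec, hd]
    set v := (Bmat N + hp • absB N) *ᵥ r with hvdef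
    set K : ℝ := 2 * (1 + hp) * rbar with hKdef
    have hKpos : 0 < K := by positivity
    have hv : ∀ i, |v i| ≤ K := by
      intro i
      have hvi : v i = ∑ j : Fin N, (Bmat N i j + hp * absB N i j) * r j := by
        simp [hvdef, mulVec, dotProduct, Matrix.add_apply, Matrix.smul_apply, smul_eq_mul]
      rw [hvi]
      calc |∑ j : Fin N, (Bmat N i j + hp * absB N i j) * r j|
          ≤ ∑ j : Fin N, |(Bmat N i j + hp * absB N i j) * r j| :=
            Finset.abs_sum_le_sum_abs _ _
        _ ≤ ∑ j : Fin N, ((1 + hp) * rbar *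
              ((if j = i then (1:ℝ) else 0) + (if (j:ℕ) = (i:ℕ) + 1 then (1:ℝ) else 0))) := by
            apply Finset.sum_le_sum
            intro j _
            have hrj := hr j
            simp only [Bmat, absB, of_apply]
            split_ifs with h1 h2 h2
            · exfalso; subst h1; omega
            · simp only [abs_one]
              rw [abs_of_nonneg (by nlinarith [hrj.1])]
              nlinarith [hrj.1, hrj.2]
            · simp only [abs_neg, abs_one]
              rw [abs_le]
              constructor <;> nlinarith [hrj.1, hrj.2]
            · simp
        _ = (1 + hp) * rbar * ((∑ j : Fin N, (if j = i then (1:ℝ) else 0))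
              + ∑ j : Fin N, (if (j:ℕ) = (i:ℕ) + 1 then (1:ℝ) else 0)) := by
            rw [← Finset.mul_sum, Finset.sum_add_distrib]
        _ ≤ K := by
            have h1 : ∑ j : Fin N, (if j = i then (1:ℝ) else 0) = 1 := by
              simp [Finset.sum_ite_eq']
            have h2 : ∑ j : Fin N, (if (j:ℕ) = (i:ℕ) + 1 then (1:ℝ) else 0) ≤ 1 := by
              rw [succ_sum (fun _ => (1:ℝ)) i]
              split_ifs <;> norm_num
            rw [h1, hKdef]
            nlinarith [h2]
    have hvv : v ⬝ᵥ v ≤ (N:ℝ) * K^2 := by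
      rw [dotProduct]
      calc ∑ i : Fin N, v i * v i ≤ ∑ _i : Fin N, K^2 := by
            apply Finset.sum_le_sum
            intro i _
            have := hv i
            nlinarith [abs_nonneg (v i), sq_abs (v i)]
        _ = (N:ℝ) * K^2 := by
            simp [Finset.sum_const, Finset.card_univ, nsmul_eq_mul]
    have hxx : (N:ℝ)^3 / 3 ≤ x ⬝ᵥ x := by
      rw [dotProduct]
      have := sum_sq_lb N
      rw [← Fin.sum_univ_eq_sum_range (fun i => ((i:ℝ)+1) * ((i:ℝ)+1)) N] at this
      exact this
    have hxx0 : 0 ≤ x ⬝ᵥ x := le_trans (by positivity) hxx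
    set C : ℝ := 4 * (1 + hp) * rbar / (N:ℝ) with hCdef
    have hC0 : 0 ≤ C := by positivity
    have key : v ⬝ᵥ v ≤ C^2 * (x ⬝ᵥ x) := by
      have h1 : (N:ℝ) * K^2 ≤ C^2 * ((N:ℝ)^3 / 3) := by
        have e1 : C^2 * ((N:ℝ)^3 / 3) = 16/3 * ((1+hp)^2 * rbar^2 * (N:ℝ)) := by
          rw [hCdef]; field_simp; ring
        have e2 : (N:ℝ) * K^2 = 4 * ((1+hp)^2 * rbar^2 * (N:ℝ)) := by
          rw [hKdef]; ring
        have ht : 0 ≤ (1+hp)^2 * rbar^2 * (N:ℝ) := by positivity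
        rw [e1, e2]; linarith
      calc v ⬝ᵥ v ≤ (N:ℝ) * K^2 := hvv
        _ ≤ C^2 * ((N:ℝ)^3 / 3) := h1
        _ ≤ C^2 * (x ⬝ᵥ x) := by nlinarith [sq_nonneg C]
    rw [hMx]
    show norm2 v ≤ 4 * (1 + hp) * rbar / (N:ℝ) * norm2 x
    rw [norm2, norm2]
    have : 4 * (1 + hp) * rbar / (N:ℝ) * Real.sqrt (x ⬝ᵥ x) = Real.sqrt (C^2 * (x ⬝ᵥ x)) := by
      rw [Real.sqrt_mul (sq_nonneg C), Real.sqrt_sq hC0, hCdef]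
    rw [this]
    exact Real.sqrt_le_sqrt key
end

section
/- Fix r̄ > 0. There exist a constant c₄ > 0 and N₀ ∈ ℕ such that for every N ≥ N₀ and every diagonal matrix R = diag(r₁,…,r_N) with 0 < r_i ≤ r̄ for all i, there exists a nonzero x ∈ ℝ^N with ‖BRBᵀ x‖₂ ≤ (c₄ r̄/N²)·‖x‖₂; that is, the smallest singular value of BRBᵀ is at most c₄ r̄/N² for N sufficiently large. -/
/-!
With `M = B R Bᵀ`, take the test vector `x = M⁻¹ 𝟙`, so that `‖M x‖² = N`. Since `B⁻¹ 𝟙 = (N - k)ₖ` (`k = 0, …, N - 1`),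
`⟪M x, x⟫ = ⟪B⁻¹ 𝟙, R⁻¹ B⁻¹ 𝟙⟫ = ∑ₖ (N - k)² / rₖ ≥ N³ / (3 r̄)`, and Cauchy–Schwarz
`‖M x‖² ≤ (3 r̄ / N²) ⟪M x, x⟫ ≤ (3 r̄ / N²) ‖M x‖ ‖x‖` gives the bound with `c₄ = 3` for every `N ≥ 1`.
-/

open Matrix MeasureTheory Real

lemma Bmat_isUpperTriangular (N : ℕ) : (Bmat N).IsUpperTriangular := by
  intro i j hij
  have : (j : ℕ) < i := hij
  simp only [Bmat, of_apply]
  rw [if_neg (by omega), if_neg (by omega)]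

lemma det_Bmat (N : ℕ) : (Bmat N).det = 1 := by
  rw [det_of_isUpperTriangular (Bmat_isUpperTriangular N)]
  simp [Bmat]

lemma Bmat_mulVec {N : ℕ} (v : Fin N → ℝ) (i : Fin N) :
    (Bmat N *ᵥ v) i = v i - if h : (i : ℕ) + 1 < N then v ⟨i + 1, h⟩ else 0 := by
  have hsplit : ∀ j, Bmat N i j * v j =
      (if j = i then v j else 0) - if (j : ℕ) = i + 1 then v j else 0 := by
    intro j
    simp only [Bmat, of_apply]
    split_ifs <;> first | omega | simp_all
  simp only [mulVec, dotProduct, hsplit, Finset.sum_sub_distrib, Finset.sum_ite_eq',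
    Finset.mem_univ, if_true]
  split_ifs with h
  · rw [Fintype.sum_eq_single (⟨(i : ℕ) + 1, h⟩ : Fin N)
      fun j hj => if_neg (by simpa [Fin.ext_iff] using hj)]
    simp
  · congr 1
    refine Finset.sum_eq_zero fun j _ => if_neg ?_
    have := j.isLt
    omega

lemma Bmat_mulVec_sub_val (N : ℕ) : Bmat N *ᵥ (fun k : Fin N => (N : ℝ) - k) = 1 := by
  ext i
  rw [Bmat_mulVec]
  split_ifs with h
  · simp only [Pi.one_apply]
    push_cast
    ring
  · have : (i : ℝ) + 1 = N := by exact_mod_cast (by omega : (i : ℕ) + 1 = N)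
    simp only [Pi.one_apply]
    linarith

lemma cube_div_three_le_sum_sq (n : ℕ) :
    (n : ℝ) ^ 3 / 3 ≤ ∑ k ∈ Finset.range n, ((k : ℝ) + 1) ^ 2 := by
  induction n with
  | zero => simp
  | succ n ih =>
    rw [Finset.sum_range_succ]
    push_cast
    nlinarith [ih, (n.cast_nonneg : (0 : ℝ) ≤ n)]

lemma cube_div_three_le_sum_sub_val_sq (N : ℕ) :
    (N : ℝ) ^ 3 / 3 ≤ ∑ k : Fin N, ((N : ℝ) - k) ^ 2 := by
  rw [← Equiv.sum_comp Fin.revPerm]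
  have hrev : ∀ k : Fin N, (N : ℝ) - (Fin.revPerm k : ℕ) = (k : ℝ) + 1 := by
    intro k
    have := k.isLt
    rw [Fin.revPerm_apply, Fin.val_rev, Nat.cast_sub (by omega)]
    push_cast; ring
  simp only [hrev]
  rw [Fin.sum_univ_eq_sum_range (fun k => ((k : ℝ) + 1) ^ 2)]
  exact cube_div_three_le_sum_sq N

lemma mul_diagonal_mul_transpose_mulVec_dotProduct {m n : Type*} [Fintype m] [Fintype n]
    [DecidableEq n] {R : Type*} [CommRing R] (A : Matrix m n R) (d : n → R) (x : m → R) :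
    (A * diagonal d * Aᵀ) *ᵥ x ⬝ᵥ x = ∑ k, d k * (Aᵀ *ᵥ x) k ^ 2 := by
  rw [← mulVec_mulVec, ← mulVec_mulVec, dotProduct_comm, dotProduct_mulVec, ← mulVec_transpose]
  simp only [dotProduct, mulVec_diagonal]
  congr 1; ext k; ring

lemma norm2_le_of_dotProduct_self_le {N : ℕ} {x y : Fin N → ℝ} {c : ℝ} (hc : 0 ≤ c)
    (h : y ⬝ᵥ y ≤ c * (y ⬝ᵥ x)) : norm2 y ≤ c * norm2 x := by
  have hcs : y ⬝ᵥ x ≤ norm2 y * norm2 x := by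
    simpa [norm2, dotProduct, sq] using Real.sum_mul_le_sqrt_mul_sqrt Finset.univ y x
  have hyy : norm2 y ^ 2 = y ⬝ᵥ y := Real.sq_sqrt (dotProduct_self_star_nonneg y)
  rcases (Real.sqrt_nonneg _ : 0 ≤ norm2 y).eq_or_lt with h0 | hpos
  · exact h0.symm.trans_le (mul_nonneg hc (Real.sqrt_nonneg _))
  refine le_of_mul_le_mul_right ?_ hpos
  calc norm2 y * norm2 y = y ⬝ᵥ y := by rw [← sq, hyy]
    _ ≤ c * (y ⬝ᵥ x) := h
    _ ≤ c * (norm2 y * norm2 x) := mul_le_mul_of_nonneg_left hcs hc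
    _ = c * norm2 x * norm2 y := by ring

noncomputable def testVec (N : ℕ) (r : Fin N → ℝ) : Fin N → ℝ :=
  (Bmat N)ᵀ⁻¹ *ᵥ fun k => ((N : ℝ) - k) / r k

lemma Bmat_transpose_mulVec_testVec (N : ℕ) (r : Fin N → ℝ) :
    (Bmat N)ᵀ *ᵥ testVec N r = fun k => ((N : ℝ) - k) / r k := by
  rw [testVec, mulVec_mulVec, mul_nonsing_inv _ (by simp [det_Bmat]), one_mulVec]

lemma mulVec_testVec {N : ℕ} {r : Fin N → ℝ} (hr : ∀ i, r i ≠ 0) :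
    (Bmat N * diagonal r * (Bmat N)ᵀ) *ᵥ testVec N r = 1 := by
  have hRF : diagonal r *ᵥ (fun k => ((N : ℝ) - k) / r k) = fun k : Fin N => (N : ℝ) - k := by
    ext k
    simp [mulVec_diagonal, mul_div_cancel₀ _ (hr k)]
  rw [← mulVec_mulVec, ← mulVec_mulVec, Bmat_transpose_mulVec_testVec, hRF, Bmat_mulVec_sub_val]

lemma cube_div_le_one_dotProduct_testVec {N : ℕ} {r : Fin N → ℝ} {rbar : ℝ} (hrbar : 0 < rbar)
    (hr : ∀ i, 0 < r i ∧ r i ≤ rbar) :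
    (N : ℝ) ^ 3 / (3 * rbar) ≤ 1 ⬝ᵥ testVec N r :=
  calc (N : ℝ) ^ 3 / (3 * rbar) ≤ ∑ k : Fin N, ((N : ℝ) - k) ^ 2 / rbar := by
        rw [← Finset.sum_div, ← div_div]
        gcongr
        exact cube_div_three_le_sum_sub_val_sq N
    _ ≤ ∑ k, r k * (((N : ℝ) - k) / r k) ^ 2 := by
        refine Finset.sum_le_sum fun k _ => ?_
        rw [div_pow, mul_div, sq (r k), mul_div_mul_left _ _ (hr k).1.ne']
        exact div_le_div_of_nonneg_left (sq_nonneg _) (hr k).1 (hr k).2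
    _ = 1 ⬝ᵥ testVec N r := by
        rw [← mulVec_testVec fun k => (hr k).1.ne', mul_diagonal_mul_transpose_mulVec_dotProduct,
          Bmat_transpose_mulVec_testVec]

theorem stmt_11_general (rbar : ℝ) :
    ∃ c₄ : ℝ, 0 < c₄ ∧ ∃ N₀ : ℕ, ∀ N : ℕ, N₀ ≤ N →
      ∀ r : Fin N → ℝ, (∀ i, 0 < r i ∧ r i ≤ rbar) →
        ∃ x : Fin N → ℝ, x ≠ 0 ∧
          norm2 ((Bmat N * Matrix.diagonal r * (Bmat N)ᵀ) *ᵥ x)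
            ≤ c₄ * rbar / (N : ℝ) ^ 2 * norm2 x := by
  refine ⟨3, three_pos, 1, fun N hN r hr => ?_⟩
  have hrbar : 0 < rbar := (hr ⟨0, hN⟩).1.trans_le (hr ⟨0, hN⟩).2
  have hN0 : (0 : ℝ) < N := by exact_mod_cast hN
  have hMx := mulVec_testVec fun k => (hr k).1.ne'
  refine ⟨testVec N r, fun hx => ?_, norm2_le_of_dotProduct_self_le (by positivity) ?_⟩
  · simpa [hx] using congrFun hMx ⟨0, hN⟩
  rw [hMx]
  calc (1 : Fin N → ℝ) ⬝ᵥ 1 = 3 * rbar / (N : ℝ) ^ 2 * ((N : ℝ) ^ 3 / (3 * rbar)) := by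
        simp only [dotProduct_one, Pi.one_apply, Finset.sum_const, Finset.card_univ,
          Fintype.card_fin, nsmul_eq_mul, mul_one]
        field_simp
    _ ≤ 3 * rbar / (N : ℝ) ^ 2 * (1 ⬝ᵥ testVec N r) := by
        gcongr
        exact cube_div_le_one_dotProduct_testVec hrbar hr

/-- the smallest singular value of BRBᵀ is at most c₄ r̄/N² for N
sufficiently large. -/
theorem stmt_11 (rbar : ℝ) (hrbar : 0 < rbar) :
    ∃ c₄ : ℝ, 0 < c₄ ∧ ∃ N₀ : ℕ, ∀ N : ℕ, N₀ ≤ N →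
      ∀ r : Fin N → ℝ, (∀ i, 0 < r i ∧ r i ≤ rbar) →
        ∃ x : Fin N → ℝ, x ≠ 0 ∧
          norm2 ((Bmat N * Matrix.diagonal r * (Bmat N)ᵀ) *ᵥ x)
            ≤ c₄ * rbar / (N : ℝ) ^ 2 * norm2 x :=
  stmt_11_general rbar
end

section
/- For 0 ≤ h_p ≤ 1, the operator norm bound ‖(B + h_p⟨B⟩)Bᵀ x‖₂ ≤ 4‖x‖₂ holds for every x ∈ ℝ^N; that is, the largest singular value of (B + h_p⟨B⟩)Bᵀ is at most 4. -/
open Matrix MeasureTheory Real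

section aux
variable {N : ℕ} [NeZero N]

/-- sum of squares of down-shifted vector is bounded by sum of squares. -/
lemma shift_down_sum_le (hN : 1 ≤ N) (x : Fin N → ℝ) :
    ∑ j : Fin N, (if 1 ≤ (j : ℕ) then x (j - 1) else 0) ^ 2 ≤ ∑ j, x j ^ 2 := by
  calc ∑ j : Fin N, (if 1 ≤ (j : ℕ) then x (j - 1) else 0) ^ 2
      ≤ ∑ j, x (j - 1) ^ 2 := by
        apply Finset.sum_le_sum; intro j _
        split
        · exact le_rfl
        · simpa using sq_nonneg _
    _ = ∑ j, x j ^ 2 := Fintype.sum_equiv (Equiv.subRight (1 : Fin N)) _ _ (fun j => rfl)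

lemma shift_up_sum_le (hN : 1 ≤ N) (y : Fin N → ℝ) :
    ∑ i : Fin N, (if (i : ℕ) + 1 < N then y (i + 1) else 0) ^ 2 ≤ ∑ i, y i ^ 2 := by
  calc ∑ i : Fin N, (if (i : ℕ) + 1 < N then y (i + 1) else 0) ^ 2
      ≤ ∑ i, y (i + 1) ^ 2 := by
        apply Finset.sum_le_sum; intro i _
        split
        · exact le_rfl
        · simpa using sq_nonneg _
    _ = ∑ i, y i ^ 2 := Fintype.sum_equiv (Equiv.addRight (1 : Fin N)) _ _ (fun j => rfl)

lemma fin_add_one_val {i : Fin N} (h : (i : ℕ) + 1 < N) : ((i + 1 : Fin N) : ℕ) = (i : ℕ) + 1 := by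
  have hN2 : 2 ≤ N := by omega
  have h1 : ((1 : Fin N) : ℕ) = 1 % N := rfl
  have h3 : 1 % N = 1 := Nat.mod_eq_of_lt (by omega)
  rw [Fin.val_add, h1, h3, Nat.mod_eq_of_lt (by omega)]

lemma fin_sub_one_val {j : Fin N} (h : 1 ≤ (j : ℕ)) : ((j - 1 : Fin N) : ℕ) = (j : ℕ) - 1 := by
  have hN2 : 2 ≤ N := by have := j.isLt; omega
  have h1 : ((1 : Fin N) : ℕ) = 1 % N := rfl
  have hjlt := j.isLt
  have h3 : 1 % N = 1 := Nat.mod_eq_of_lt (by omega)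
  have h2 : ((j - 1 : Fin N) : ℕ) = (N - ((1 : Fin N) : ℕ) + (j : ℕ)) % N := by
    rw [Fin.sub_def]
  rw [h2, h1, h3]
  have h4 : N - 1 + (j : ℕ) = ((j : ℕ) - 1) + N := by omega
  rw [h4, Nat.add_mod_right, Nat.mod_eq_of_lt (by omega)]

/-- entry formula for `C *ᵥ y` for a matrix with `a` on diagonal, `b` on superdiagonal. -/
lemma mulVec_diag_super (a b : ℝ) (C : Matrix (Fin N) (Fin N) ℝ)
    (hC : ∀ i j, C i j = if j = i then a else if (j : ℕ) = (i : ℕ) + 1 then b else 0)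
    (y : Fin N → ℝ) (i : Fin N) :
    (C *ᵥ y) i = a * y i + (if (i : ℕ) + 1 < N then b * y (i + 1) else 0) := by
  have hterm : ∀ j, C i j * y j =
      (if j = i then a * y j else 0) + (if (j : ℕ) = (i : ℕ) + 1 then b * y j else 0) := by
    intro j
    rw [hC]
    by_cases h1 : j = i
    · subst h1; simp [(by omega : ¬ ((j : ℕ) = (j : ℕ) + 1))]
    · by_cases h2 : (j : ℕ) = (i : ℕ) + 1 <;> simp [h1, h2]
  show ∑ j, C i j * y j = _
  rw [Finset.sum_congr rfl (fun j _ => hterm j), Finset.sum_add_distrib]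
  congr 1
  · simp
  · by_cases h : (i : ℕ) + 1 < N
    · rw [if_pos h, Finset.sum_eq_single (i + 1)]
      · rw [if_pos (fin_add_one_val h)]
      · intro j _ hj
        rw [if_neg]
        intro hc
        exact hj (Fin.ext (by rw [fin_add_one_val h]; omega))
      · simp
    · rw [if_neg h]
      apply Finset.sum_eq_zero
      intro j _
      rw [if_neg]
      have := j.isLt; omega

/-- entry formula for `(Bmat N)ᵀ *ᵥ x`. -/
lemma mulVec_Bt (x : Fin N → ℝ) (j : Fin N) :
    ((Bmat N)ᵀ *ᵥ x) j = x j + (if 1 ≤ (j : ℕ) then -(x (j - 1)) else 0) := by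
  have hterm : ∀ i, (Bmat N)ᵀ j i * x i =
      (if i = j then x i else 0) + (if (j : ℕ) = (i : ℕ) + 1 then -(x i) else 0) := by
    intro i
    show (Bmat N i j) * x i = _
    unfold Bmat
    simp only [Matrix.of_apply]
    by_cases h1 : j = i
    · subst h1; simp [(by omega : ¬ ((j : ℕ) = (j : ℕ) + 1))]
    · have h1' : i ≠ j := fun h => h1 h.symm
      by_cases h2 : (j : ℕ) = (i : ℕ) + 1 <;> simp [h1, h2, h1']
  show ∑ i, (Bmat N)ᵀ j i * x i = _
  rw [Finset.sum_congr rfl (fun i _ => hterm i), Finset.sum_add_distrib]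
  congr 1
  · simp
  · by_cases h : 1 ≤ (j : ℕ)
    · rw [if_pos h, Finset.sum_eq_single (j - 1)]
      · rw [if_pos (by rw [fin_sub_one_val h]; omega)]
      · intro i _ hi
        rw [if_neg]
        intro hc
        exact hi (Fin.ext (by rw [fin_sub_one_val h]; omega))
      · simp
    · rw [if_neg h]
      apply Finset.sum_eq_zero
      intro i _
      rw [if_neg]
      omega

end aux

/-- for 0 ≤ h_p ≤ 1, the largest singular value of (B + h_p⟨B⟩)Bᵀ is at
most 4. -/
theorem stmt_16 (N : ℕ) (hN : 1 ≤ N) (hp : ℝ) (hhp0 : 0 ≤ hp) (hhp1 : hp ≤ 1) :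
    ∀ x : Fin N → ℝ,
      norm2 (((Bmat N + hp • absB N) * (Bmat N)ᵀ) *ᵥ x) ≤ 4 * norm2 x := by
  haveI : NeZero N := ⟨by omega⟩
  intro x
  set C : Matrix (Fin N) (Fin N) ℝ := Bmat N + hp • absB N with hCdef
  have hC : ∀ i j, C i j = if j = i then (1 + hp) else if (j : ℕ) = (i : ℕ) + 1 then (hp - 1) else 0 := by
    intro i j
    simp only [hCdef, Matrix.add_apply, Matrix.smul_apply, smul_eq_mul]
    unfold absB Bmat
    simp only [Matrix.of_apply]
    by_cases h1 : j = i
    · simp [h1]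
    · by_cases h2 : (j : ℕ) = (i : ℕ) + 1 <;> simp [h1, h2] <;> ring
  set u : Fin N → ℝ := (Bmat N)ᵀ *ᵥ x with hu
  -- step 1 : u ⬝ᵥ u ≤ 4 * (x ⬝ᵥ x)
  have h1 : u ⬝ᵥ u ≤ 4 * (x ⬝ᵥ x) := by
    have hxx : x ⬝ᵥ x = ∑ j, x j ^ 2 := by simp [dotProduct, sq]
    have huu : u ⬝ᵥ u = ∑ j, (x j + (if 1 ≤ (j : ℕ) then -(x (j - 1)) else 0)) ^ 2 := by
      simp only [dotProduct, ← sq]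
      exact Finset.sum_congr rfl (fun j _ => by rw [hu, mulVec_Bt])
    rw [huu, hxx]
    have hts := shift_down_sum_le hN x
    calc ∑ j, (x j + (if 1 ≤ (j : ℕ) then -(x (j - 1)) else 0)) ^ 2
        ≤ ∑ j, (2 * x j ^ 2 + 2 * (if 1 ≤ (j : ℕ) then x (j - 1) else 0) ^ 2) := by
          apply Finset.sum_le_sum
          intro j _
          have : (if 1 ≤ (j : ℕ) then -(x (j - 1)) else 0) = -(if 1 ≤ (j : ℕ) then x (j - 1) else 0) := by
            split <;> simp
          rw [this]
          nlinarith [sq_nonneg (x j + (if 1 ≤ (j : ℕ) then x (j - 1) else 0))]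
      _ = 2 * ∑ j, x j ^ 2 + 2 * ∑ j : Fin N, (if 1 ≤ (j : ℕ) then x (j - 1) else 0) ^ 2 := by
          rw [Finset.sum_add_distrib, Finset.mul_sum, Finset.mul_sum]
      _ ≤ 4 * ∑ j, x j ^ 2 := by linarith
  -- step 2 : (C *ᵥ u) ⬝ᵥ (C *ᵥ u) ≤ 4 * (u ⬝ᵥ u)
  have h2 : (C *ᵥ u) ⬝ᵥ (C *ᵥ u) ≤ 4 * (u ⬝ᵥ u) := by
    have huu : u ⬝ᵥ u = ∑ i, u i ^ 2 := by simp [dotProduct, sq]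
    have hcc : (C *ᵥ u) ⬝ᵥ (C *ᵥ u) =
        ∑ i, ((1 + hp) * u i + (hp - 1) * (if (i : ℕ) + 1 < N then u (i + 1) else 0)) ^ 2 := by
      simp only [dotProduct, ← sq]
      refine Finset.sum_congr rfl (fun i _ => ?_)
      rw [mulVec_diag_super (1 + hp) (hp - 1) C hC]
      congr 1
      split <;> ring
    rw [hcc, huu]
    have hts := shift_up_sum_le hN u
    calc ∑ i, ((1 + hp) * u i + (hp - 1) * (if (i : ℕ) + 1 < N then u (i + 1) else 0)) ^ 2
        ≤ ∑ i, (2 * (1 + hp) * u i ^ 2 + 2 * (1 - hp) * (if (i : ℕ) + 1 < N then u (i + 1) else 0) ^ 2) := by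
          apply Finset.sum_le_sum
          intro i _
          set v := (if (i : ℕ) + 1 < N then u (i + 1) else 0)
          nlinarith [mul_nonneg (mul_nonneg (by linarith : (0:ℝ) ≤ 1 + hp) (by linarith : (0:ℝ) ≤ 1 - hp)) (sq_nonneg (u i + v))]
      _ = 2 * (1 + hp) * ∑ i, u i ^ 2 + 2 * (1 - hp) * ∑ i : Fin N, (if (i : ℕ) + 1 < N then u (i + 1) else 0) ^ 2 := by
          rw [Finset.sum_add_distrib, Finset.mul_sum, Finset.mul_sum]
      _ ≤ 2 * (1 + hp) * ∑ i, u i ^ 2 + 2 * (1 - hp) * ∑ i, u i ^ 2 := by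
          have := mul_le_mul_of_nonneg_left hts (by linarith : (0:ℝ) ≤ 2 * (1 - hp))
          linarith
      _ ≤ 4 * ∑ i, u i ^ 2 := by
          have hnn : 0 ≤ ∑ i, u i ^ 2 := by positivity
          nlinarith
  -- combine
  have hmv : (C * (Bmat N)ᵀ) *ᵥ x = C *ᵥ u := by rw [hu, Matrix.mulVec_mulVec]
  unfold norm2
  rw [hmv]
  have key : (C *ᵥ u) ⬝ᵥ (C *ᵥ u) ≤ 16 * (x ⬝ᵥ x) := by linarith
  calc Real.sqrt ((C *ᵥ u) ⬝ᵥ (C *ᵥ u)) ≤ Real.sqrt (16 * (x ⬝ᵥ x)) := Real.sqrt_le_sqrt key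
    _ = 4 * Real.sqrt (x ⬝ᵥ x) := by
        rw [show (16:ℝ) = 4 ^ 2 by norm_num, Real.sqrt_mul (by positivity) _, Real.sqrt_sq (by norm_num)]
end

section
/- Let 0 ≤ h_p ≤ 1, 0 < h_d < 1, let R = diag(r₁,…,r_N) with 0 < r_i ≤ r̄ for all i, and let E = diag(1, q, …, q^{N−1}) with q = (1−h_d)/(1+h_d). Then there exists a nonzero x ∈ ℝ^N with ‖E(B + h_p⟨B⟩)RBᵀ x‖₂ ≤ 4r̄·((1−h_d)/(1+h_d))^{N−1}·‖x‖₂; that is, the smallest singular value of E(B + h_p⟨B⟩)RBᵀ is at most 4r̄·((1−h_d)/(1+h_d))^{N−1}, and hence decays exponentially in N. -/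
open Matrix MeasureTheory Real

/-! The vector `x` is chosen so that the whole product collapses onto the last coordinate, where
`E` contributes `q ^ (N - 1)`. With `y k = (1 + h_p) ^ k * (1 - h_p) ^ (N - 1 - k)`, the upper
bidiagonal matrix `B + h_p⟨B⟩` maps `y` to `(1 + h_p) ^ N • e_N`, and `x` is the vector of partial
sums of `R⁻¹ y`, so that `Bᵀ x = R⁻¹ y`. Since `x ≥ 0`, `‖x‖ ≥ x_N ≥ (1 + h_p) ^ (N - 1) / r̄`, and
`1 + h_p ≤ 2` finishes the estimate. -/

open Finset

noncomputable def bidiag (N : ℕ) (a b : ℝ) : Matrix (Fin N) (Fin N) ℝ :=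
  Matrix.of fun i j => if j = i then a else if (j : ℕ) = (i : ℕ) + 1 then b else 0

section Bidiagonal

variable {N : ℕ}

lemma bidiag_apply (a b : ℝ) (i j : Fin N) :
    bidiag N a b i j = (if (j : ℕ) = i then a else 0) + if (j : ℕ) = i + 1 then b else 0 := by
  simp only [bidiag, Matrix.of_apply, Fin.ext_iff]
  split_ifs <;> first | omega | ring

lemma Bmat_eq_bidiag : Bmat N = bidiag N 1 (-1) := rfl

lemma Bmat_add_smul_absB (h : ℝ) : Bmat N + h • absB N = bidiag N (1 + h) (h - 1) := by
  ext i j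
  simp only [Matrix.add_apply, Matrix.smul_apply, absB, Bmat, bidiag, Matrix.of_apply, smul_eq_mul]
  split_ifs <;> norm_num [add_comm, sub_eq_add_neg]

lemma bidiag_mulVec (a b : ℝ) (g : ℕ → ℝ) (i : Fin N) :
    (bidiag N a b *ᵥ fun j => g j) i = a * g i + if (i : ℕ) + 1 < N then b * g (i + 1) else 0 := by
  simp only [Matrix.mulVec, dotProduct, bidiag_apply, add_mul, ite_mul, zero_mul, sum_add_distrib]
  rw [Fin.sum_univ_eq_sum_range (fun j => if j = (i : ℕ) then a * g j else 0),
    Fin.sum_univ_eq_sum_range (fun j => if j = (i : ℕ) + 1 then b * g j else 0),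
    sum_ite_eq', sum_ite_eq', if_pos (mem_range.2 i.isLt)]
  simp only [mem_range]

lemma bidiag_transpose_mulVec (a b : ℝ) (g : ℕ → ℝ) (hg : g 0 = 0) (j : Fin N) :
    ((bidiag N a b)ᵀ *ᵥ fun i => g (i + 1)) j = a * g (j + 1) + b * g j := by
  simp only [Matrix.mulVec, dotProduct, Matrix.transpose_apply, bidiag_apply, add_mul, ite_mul,
    zero_mul, sum_add_distrib]
  rw [Fin.sum_univ_eq_sum_range (fun i => if (j : ℕ) = i then a * g (i + 1) else 0),
    Fin.sum_univ_eq_sum_range (fun i => if (j : ℕ) = i + 1 then b * g (i + 1) else 0),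
    sum_ite_eq, if_pos (mem_range.2 j.isLt)]
  congr 1
  rcases Nat.eq_zero_or_eq_succ_pred (j : ℕ) with hj | hj
  · rw [hj, hg, mul_zero]
    exact sum_eq_zero fun i _ => if_neg (by omega)
  · rw [hj]
    simp only [Nat.succ_inj, sum_ite_eq, mem_range]
    rw [if_pos (by omega)]

lemma bidiag_mulVec_geometric (n : ℕ) (a c : ℝ) :
    bidiag (n + 1) a (-c) *ᵥ (fun j => a ^ (j : ℕ) * c ^ (n - j)) =
      Pi.single (Fin.last n) (a ^ (n + 1)) := by
  ext i
  rw [bidiag_mulVec a (-c) (fun j => a ^ j * c ^ (n - j))]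
  rcases (Fin.le_last i).lt_or_eq with hi | rfl
  · have hi' : (i : ℕ) < n := hi
    rw [if_pos (by omega), Pi.single_eq_of_ne hi.ne, show n - i = n - (i + 1) + 1 by omega]
    ring
  · simp [pow_succ']

lemma Bmat_transpose_mulVec_partialSums (f : ℕ → ℝ) :
    (Bmat N)ᵀ *ᵥ (fun j => ∑ k ∈ range (j + 1), f k) = fun j : Fin N => f j := by
  ext j
  rw [Bmat_eq_bidiag, bidiag_transpose_mulVec 1 (-1) (fun m => ∑ k ∈ range m, f k) (sum_range_zero f),
    sum_range_succ]
  ring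

end Bidiagonal

lemma norm2_single {N : ℕ} (i : Fin N) (c : ℝ) : norm2 (Pi.single i c) = |c| := by
  rw [norm2, dotProduct_single, Pi.single_eq_same, Real.sqrt_mul_self_eq_abs]

lemma abs_le_norm2 {N : ℕ} (x : Fin N → ℝ) (i : Fin N) : |x i| ≤ norm2 x :=
  Real.abs_le_sqrt <| (sq (x i)).trans_le <|
    single_le_sum (f := fun j => x j * x j) (fun j _ => mul_self_nonneg (x j)) (mem_univ i)

lemma le_norm2_partialSums (n : ℕ) (f : ℕ → ℝ) (hf : ∀ k, 0 ≤ f k) :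
    f n ≤ norm2 (fun j : Fin (n + 1) => ∑ k ∈ range (j + 1), f k) :=
  calc f n ≤ ∑ k ∈ range (n + 1), f k := single_le_sum (fun k _ => hf k) (self_mem_range_succ n)
    _ ≤ |∑ k ∈ range (n + 1), f k| := le_abs_self _
    _ ≤ _ := abs_le_norm2 (fun j : Fin (n + 1) => ∑ k ∈ range (j + 1), f k) (Fin.last n)

lemma mulVec_partialSums_eq_single (n : ℕ) (q hp : ℝ) (r : Fin (n + 1) → ℝ) (f : ℕ → ℝ)
    (hf : ∀ j : Fin (n + 1), r j * f j = (1 + hp) ^ (j : ℕ) * (1 - hp) ^ (n - j)) :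
    (Matrix.diagonal (fun i : Fin (n + 1) => q ^ (i : ℕ)) *
        ((Bmat (n + 1) + hp • absB (n + 1)) * Matrix.diagonal r * (Bmat (n + 1))ᵀ)) *ᵥ
      (fun j => ∑ k ∈ range (j + 1), f k) =
      Pi.single (Fin.last n) (q ^ n * (1 + hp) ^ (n + 1)) := by
  have hRf : Matrix.diagonal r *ᵥ (fun j : Fin (n + 1) => f j) =
      fun j : Fin (n + 1) => (1 + hp) ^ (j : ℕ) * (1 - hp) ^ (n - j) := by
    ext j
    rw [Matrix.mulVec_diagonal, hf]
  rw [← Matrix.mulVec_mulVec, ← Matrix.mulVec_mulVec, ← Matrix.mulVec_mulVec,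
    Bmat_transpose_mulVec_partialSums, hRf, Bmat_add_smul_absB, ← neg_sub 1 hp,
    bidiag_mulVec_geometric, Matrix.diagonal_mulVec_single, Fin.val_last]

/-- the smallest singular value of E(B + h_p⟨B⟩)RBᵀ is at most
4r̄·((1−h_d)/(1+h_d))^{N−1}, i.e. it decays exponentially in N. -/
theorem stmt_17 (N : ℕ) (hN : 1 ≤ N) (hp hd : ℝ) (hhp0 : 0 ≤ hp) (hhp1 : hp ≤ 1)
    (hhd0 : 0 < hd) (hhd1 : hd < 1)
    (rbar : ℝ) (r : Fin N → ℝ) (hr : ∀ i, 0 < r i ∧ r i ≤ rbar) :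
    ∃ x : Fin N → ℝ, x ≠ 0 ∧
      norm2 ((Matrix.diagonal (fun i : Fin N => ((1 - hd) / (1 + hd)) ^ (i : ℕ)) *
          ((Bmat N + hp • absB N) * Matrix.diagonal r * (Bmat N)ᵀ)) *ᵥ x)
        ≤ 4 * rbar * ((1 - hd) / (1 + hd)) ^ (N - 1) * norm2 x := by
  obtain ⟨n, rfl⟩ : ∃ n, N = n + 1 := ⟨N - 1, by omega⟩
  set q := (1 - hd) / (1 + hd)
  have hq : 0 ≤ q := div_nonneg (by linarith) (by linarith)
  have h1hp : 0 ≤ 1 - hp := sub_nonneg.2 hhp1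
  obtain ⟨hr_pos, hr_le⟩ := hr (Fin.last n)
  let f : ℕ → ℝ := fun k => if h : k < n + 1 then (1 + hp) ^ k * (1 - hp) ^ (n - k) / r ⟨k, h⟩ else 0
  have hf_nonneg (k : ℕ) : 0 ≤ f k := by
    unfold f
    split_ifs with h
    · exact div_nonneg (by positivity) (hr ⟨k, h⟩).1.le
    · exact le_rfl
  have hRf (j : Fin (n + 1)) : r j * f j = (1 + hp) ^ (j : ℕ) * (1 - hp) ^ (n - j) := by
    simp only [f, dif_pos j.isLt, Fin.eta]
    exact mul_div_cancel₀ _ (hr j).1.ne'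
  have hf_last : (1 + hp) ^ n ≤ rbar * f n := by
    have h := hRf (Fin.last n)
    rw [Fin.val_last, Nat.sub_self, pow_zero, mul_one] at h
    exact h ▸ mul_le_mul_of_nonneg_right hr_le (hf_nonneg n)
  set x : Fin (n + 1) → ℝ := fun j => ∑ k ∈ range (j + 1), f k
  have hx : (1 + hp) ^ n ≤ rbar * norm2 x := hf_last.trans <|
    mul_le_mul_of_nonneg_left (le_norm2_partialSums n f hf_nonneg) (hr_pos.le.trans hr_le)
  refine ⟨x, fun hx0 => ?_, ?_⟩
  · rw [hx0, norm2, dotProduct_zero, Real.sqrt_zero, mul_zero] at hx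
    exact hx.not_gt (by positivity)
  rw [mulVec_partialSums_eq_single n q hp r f hRf, norm2_single, abs_of_nonneg (by positivity),
    Nat.add_sub_cancel]
  calc q ^ n * (1 + hp) ^ (n + 1) = q ^ n * (1 + hp) * (1 + hp) ^ n := by ring
    _ ≤ q ^ n * 2 * (rbar * norm2 x) := by gcongr; linarith
    _ ≤ _ := by nlinarith [pow_nonneg hq n, (by positivity : (0 : ℝ) ≤ (1 + hp) ^ n).trans hx]
end

section
/- Let h_p ≥ 0 and h_d ∈ ℝ, and suppose that either h_d ≥ (2h_p⁴ + 12h_p³ + 25h_p² + 30h_p + 11)/(3h_p² + 6h_p + 7), or h_p > 1 and h_d ≥ (h_p³ + 5h_p² + 8h_p + 10)/(h_p − 1). Then the quartic polynomial p(s) = s⁴ + (3 + h_p)s³ + (3 + h_d + (1 + h_p)²)s² + 2(1 + h_p)(1 + h_d)s + (1 + h_d)² has a complex root s₀ ∈ ℂ with Re(s₀) ≥ 0. (This polynomial is the denominator of the transfer function of the second-to-last vehicle in a bidirectional string with unit masses and gains and asymmetry coefficients h_p, h_d; having a root with nonnegative real part means strings of N ≥ 2 vehicles are unstable.) -/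
/-!
Routh–Hurwitz argument. Over `ℝ` every monic quartic splits into two monic quadratics
`(s² + αs + β)(s² + γs + δ)`; if all its roots lie in the open left half-plane, then
`α, β, γ, δ > 0`, and the Hurwitz determinant `abc - c² - a²d` of `s⁴ + as³ + bs² + cs + d`
equals `αγ((β - δ)² + (α + γ)(αδ + βγ)) > 0`. For the given quartic this determinant is
`(1 + h_d)(2h_p⁴ + 12h_p³ + 25h_p² + 30h_p + 11 - h_d(3h_p² + 6h_p + 7))`, which the first
threshold makes nonpositive; the second threshold implies the first.
-/

open Complex Polynomial

lemma exists_quadratic_factors (a b c d : ℝ) :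
    ∃ α β γ δ : ℝ, α + γ = a ∧ β + δ + α * γ = b ∧ α * δ + β * γ = c ∧ β * δ = d := by
  have hf : IsMonicOfDegree (X ^ 4 + C a * X ^ 3 + C b * X ^ 2 + C c * X + C d) (2 + 2) := by
    rw [isMonicOfDegree_iff]
    constructor
    · compute_degree!
    · simp
  obtain ⟨f₁, f₂, hf₁, hf₂, hf⟩ := hf.eq_isMonicOfDegree_two_mul_isMonicOfDegree
  obtain ⟨α, β, rfl⟩ := isMonicOfDegree_two_iff.mp hf₁
  obtain ⟨γ, δ, rfl⟩ := isMonicOfDegree_two_iff.mp hf₂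
  have hprod : (X ^ 2 + C α * X + C β) * (X ^ 2 + C γ * X + C δ) = X ^ 4 + C (α + γ) * X ^ 3
      + C (β + δ + α * γ) * X ^ 2 + C (α * δ + β * γ) * X + C (β * δ) := by
    simp only [map_add, map_mul]; ring
  rw [hprod] at hf
  refine ⟨α, β, γ, δ, ?_, ?_, ?_, ?_⟩
  · simpa [coeff_X, coeff_C, -map_add, -map_mul] using (congrArg (coeff · 3) hf).symm
  · simpa [coeff_X, coeff_C, -map_add, -map_mul] using (congrArg (coeff · 2) hf).symm
  · simpa [coeff_X, coeff_C, -map_add, -map_mul] using (congrArg (coeff · 1) hf).symm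
  · simpa [coeff_X, coeff_C, -map_add, -map_mul] using (congrArg (coeff · 0) hf).symm

lemma pos_of_forall_quadratic_root_re_neg (α β : ℝ)
    (h : ∀ z : ℂ, z ^ 2 + α * z + β = 0 → z.re < 0) : 0 < α ∧ 0 < β := by
  obtain ⟨z, hz⟩ : ∃ z : ℂ, z ^ 2 + α * z + β = 0 := by
    obtain ⟨s, hs⟩ := IsAlgClosed.exists_eq_mul_self (discrim 1 (α : ℂ) β)
    obtain ⟨z, hz⟩ := exists_quadratic_eq_zero one_ne_zero ⟨s, hs⟩
    exact ⟨z, by linear_combination hz⟩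
  constructor
  · -- the two roots `z` and `-α - z` have real parts summing to `-α`
    have hw : (-α - z) ^ 2 + α * (-α - z) + β = 0 := by linear_combination hz
    have hz_re := h z hz
    have hw_re := h _ hw
    simp only [sub_re, neg_re, ofReal_re] at hw_re
    linarith
  · by_contra! hβ
    have hdisc : α ^ 2 ≤ α ^ 2 - 4 * β := by linarith
    set x := (-α + √(α ^ 2 - 4 * β)) / 2 with hx
    have hx_nonneg : 0 ≤ x := by
      have := Real.abs_le_sqrt hdisc
      have := le_abs_self α
      linarith
    have hx_root : x ^ 2 + α * x + β = 0 := by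
      linear_combination Real.sq_sqrt (hdisc.trans' (sq_nonneg α)) / 4
    have hx_re := h x (by exact_mod_cast hx_root)
    simp only [ofReal_re] at hx_re
    linarith

theorem quartic_hurwitz_of_forall_root_re_neg (a b c d : ℝ)
    (h : ∀ z : ℂ, z ^ 4 + a * z ^ 3 + b * z ^ 2 + c * z + d = 0 → z.re < 0) :
    c ^ 2 + a ^ 2 * d < a * b * c := by
  obtain ⟨α, β, γ, δ, rfl, rfl, rfl, rfl⟩ := exists_quadratic_factors a b c d
  have hfactor (z : ℂ) : z ^ 4 + ↑(α + γ) * z ^ 3 + ↑(β + δ + α * γ) * z ^ 2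
      + ↑(α * δ + β * γ) * z + ↑(β * δ) = (z ^ 2 + α * z + β) * (z ^ 2 + γ * z + δ) := by
    push_cast; ring
  obtain ⟨hα, hβ⟩ := pos_of_forall_quadratic_root_re_neg α β fun z hz ↦
    h z (by rw [hfactor, hz, zero_mul])
  obtain ⟨hγ, hδ⟩ := pos_of_forall_quadratic_root_re_neg γ δ fun z hz ↦
    h z (by rw [hfactor, hz, mul_zero])
  have hdet : 0 < α * γ * ((β - δ) ^ 2 + (α + γ) * (α * δ + β * γ)) := by positivity
  linear_combination hdet

lemma threshold_le_of_one_lt (hp : ℝ) (h : 1 < hp) :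
    (2 * hp ^ 4 + 12 * hp ^ 3 + 25 * hp ^ 2 + 30 * hp + 11) / (3 * hp ^ 2 + 6 * hp + 7) ≤
      (hp ^ 3 + 5 * hp ^ 2 + 8 * hp + 10) / (hp - 1) := by
  have hp0 : 0 < hp := by linarith
  rw [div_le_div_iff₀ (by positivity) (by linarith)]
  nlinarith [pow_pos hp0 3, pow_pos hp0 4, pow_pos hp0 5, sq_nonneg hp]

lemma hurwitz_le_of_threshold_le (hp hd : ℝ) (hhp : 0 ≤ hp)
    (h : (2 * hp ^ 4 + 12 * hp ^ 3 + 25 * hp ^ 2 + 30 * hp + 11) / (3 * hp ^ 2 + 6 * hp + 7) ≤ hd) :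
    (3 + hp) * (3 + hd + (1 + hp) ^ 2) * (2 * (1 + hp) * (1 + hd)) ≤
      (2 * (1 + hp) * (1 + hd)) ^ 2 + (3 + hp) ^ 2 * (1 + hd) ^ 2 := by
  have hD : 0 < 3 * hp ^ 2 + 6 * hp + 7 := by positivity
  have hhd : 0 ≤ hd := le_trans (by positivity) h
  rw [div_le_iff₀ hD] at h
  have := mul_nonneg (by linarith : 0 ≤ 1 + hd) (sub_nonneg.mpr h)
  linear_combination this

/-- if h_d ≥ (2h_p⁴ + 12h_p³ + 25h_p² + 30h_p + 11)/(3h_p² + 6h_p + 7), or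
h_p > 1 and h_d ≥ (h_p³ + 5h_p² + 8h_p + 10)/(h_p − 1), then the quartic
s⁴ + (3+h_p)s³ + (3 + h_d + (1+h_p)²)s² + 2(1+h_p)(1+h_d)s + (1+h_d)² has a complex root
with nonnegative real part (instability of strings with N ≥ 2 vehicles). -/
theorem stmt_18 (hp hd : ℝ) (hhp : 0 ≤ hp)
    (hcond :
      (2 * hp ^ 4 + 12 * hp ^ 3 + 25 * hp ^ 2 + 30 * hp + 11) / (3 * hp ^ 2 + 6 * hp + 7) ≤ hd ∨
      (1 < hp ∧ (hp ^ 3 + 5 * hp ^ 2 + 8 * hp + 10) / (hp - 1) ≤ hd)) :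
    ∃ s₀ : ℂ,
      s₀ ^ 4 + (3 + (hp : ℂ)) * s₀ ^ 3 + (3 + (hd : ℂ) + (1 + (hp : ℂ)) ^ 2) * s₀ ^ 2
          + 2 * (1 + (hp : ℂ)) * (1 + (hd : ℂ)) * s₀ + (1 + (hd : ℂ)) ^ 2 = 0 ∧
      0 ≤ s₀.re := by
  by_contra! hstable
  have hthreshold := hcond.elim id fun ⟨hp1, h⟩ ↦ (threshold_le_of_one_lt hp hp1).trans h
  have hle := hurwitz_le_of_threshold_le hp hd hhp hthreshold
  have hlt := quartic_hurwitz_of_forall_root_re_neg (3 + hp) (3 + hd + (1 + hp) ^ 2)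
    (2 * (1 + hp) * (1 + hd)) ((1 + hd) ^ 2) fun z hz ↦ hstable z (by push_cast at hz; exact hz)
  linarith
end
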